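/- arXiv:1909.07473 — 8 statements merged into one kernel-verified Lean document; each statement's English description precedes it below -/
import Mathlib

section
/- Let p be an odd prime and L a quadratic lattice over Z_p of rank r that is maximal (equivalently, every Jordan component has scale valuation at most 1). For an integer m divisible by p, every bad-type solution v of Q(v) ≡ m (mod p^{n+1}) (i.e. v ≡ 0 mod p on the unimodular Jordan part but v not ≡ 0 mod p) arises from a good-type solution of the auxiliary form Q' (obtained by swapping the scales ν_j ↦ 1−ν_j) for m/p mod p^n; consequently N^{bad}_{m,Q}(p^{n+1}) = p^{r−s₀} · N^{good}_{m/p,Q'}(p^n), where s₀ is the rank of the unimodular Jordan part. -/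
theorem sumCong (p : ℕ) (hp : 0 < p) (n r : ℕ) (ν : Fin r → ℕ) (hν : ∀ j, ν j ≤ 1)
    (d V W : Fin r → ℤ)
    (h0 : ∀ j, ν j = 0 → V j = p * W j) (h1 : ∀ j, ν j = 1 → (p:ℤ)^n ∣ V j - W j) (m' : ℤ) :
    ((p:ℤ)^(n+1) ∣ (∑ j, (p:ℤ)^(ν j) * d j * V j^2) - p * m') ↔
      ((p:ℤ)^n ∣ (∑ j, (p:ℤ)^(1 - ν j) * d j * W j^2) - m') := by
  have hdvd : (p:ℤ)^(n+1) ∣ (∑ j, (p:ℤ)^(ν j) * d j * V j^2)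
      - p * ∑ j, (p:ℤ)^(1 - ν j) * d j * W j^2 := by
    rw [Finset.mul_sum, ← Finset.sum_sub_distrib]
    refine Finset.dvd_sum fun j _ => ?_
    rcases Nat.le_one_iff_eq_zero_or_eq_one.mp (hν j) with h | h
    · rw [h0 j h, h]
      ring_nf
      simp
    · obtain ⟨k, hk⟩ := h1 j h
      rw [h]
      have : (p:ℤ)^1 * d j * V j ^2 - p * ((p:ℤ)^(1-1) * d j * W j^2)
          = p * (d j * (V j + W j)) * (V j - W j) := by ring
      rw [this, hk, pow_succ']
      exact ⟨d j * (V j + W j) * k, by ring⟩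
  constructor
  · intro h
    have h2 : (p:ℤ)^(n+1) ∣ p * ∑ j, (p:ℤ)^(1 - ν j) * d j * W j^2 - p * m' := by
      have := dvd_sub h hdvd
      rwa [sub_sub_sub_cancel_left] at this
    rw [← mul_sub, pow_succ'] at h2
    exact (mul_dvd_mul_iff_left (by exact_mod_cast hp.ne' : (p:ℤ) ≠ 0)).mp h2
  · intro h
    have h2 : (p:ℤ)^(n+1) ∣ p * ∑ j, (p:ℤ)^(1 - ν j) * d j * W j^2 - p * m' := by
      rw [← mul_sub, pow_succ']
      exact mul_dvd_mul_left _ h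
    have := dvd_add hdvd h2
    rwa [sub_add_sub_cancel] at this

theorem sumZMod (p N : ℕ) [NeZero N] (r : ℕ) (c : Fin r → ℕ) (d : Fin r → ℤ)
    (v : Fin r → ZMod N) (m : ℤ) :
    ((∑ j, (p : ZMod N)^(c j) * (d j : ZMod N) * (v j)^2) = (m : ZMod N)) ↔
      (N:ℤ) ∣ (∑ j, (p:ℤ)^(c j) * d j * ((v j).val : ℤ)^2) - m := by
  have key : (∑ j, (p : ZMod N)^(c j) * (d j : ZMod N) * (v j)^2)
      = ((∑ j, (p:ℤ)^(c j) * d j * ((v j).val : ℤ)^2 : ℤ) : ZMod N) := by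
    push_cast
    refine Finset.sum_congr rfl fun j _ => ?_
    rw [ZMod.natCast_val, ZMod.cast_id]
  rw [key, ZMod.intCast_eq_intCast_iff, Int.modEq_iff_dvd]
  exact dvd_sub_comm


/-- Hanke's bad-type reduction for maximal lattices at odd primes: for `p ∣ m`, the number
of bad-type solutions of `Q(v) ≡ m (mod p^{n+1})` equals `p^{r-s₀}` times the number of
good-type solutions of the auxiliary form `Q'` (scales `ν ↦ 1 - ν`) for `m/p` modulo `p^n`.
Here (since `p` is odd) the Jordan splitting is diagonal: `Q(v) = ∑ j, p^{ν j} d j (v j)²`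
with `d j` a `p`-adic unit and `ν j ≤ 1` (maximality), and `s₀` is the rank of the
unimodular Jordan part. -/
theorem stmt_0 (p : ℕ) (hp : p.Prime) (hodd : p ≠ 2) (r : ℕ)
    (ν : Fin r → ℕ) (hν : ∀ j, ν j ≤ 1)
    (d : Fin r → ℤ) (hd : ∀ j, ¬ (p : ℤ) ∣ d j)
    (m m' : ℤ) (hm : m = p * m') (n : ℕ) (hn : 1 ≤ n) :
    Nat.card {v : Fin r → ZMod (p ^ (n + 1)) //
      ((∀ j, ν j = 0 →
          ZMod.castHom (dvd_pow_self p (Nat.succ_ne_zero n)) (ZMod p) (v j) = 0) ∧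
        (∃ j, ZMod.castHom (dvd_pow_self p (Nat.succ_ne_zero n)) (ZMod p) (v j) ≠ 0)) ∧
      (∑ j, (p : ZMod (p ^ (n + 1))) ^ (ν j) * (d j : ZMod (p ^ (n + 1))) * (v j) ^ 2)
        = (m : ZMod (p ^ (n + 1)))} =
    p ^ (r - (Finset.univ.filter (fun j => ν j = 0)).card) *
      Nat.card {v : Fin r → ZMod (p ^ n) //
        (∃ j, 1 - ν j = 0 ∧
          ZMod.castHom (dvd_pow_self p (by omega : n ≠ 0)) (ZMod p) (v j) ≠ 0) ∧
        (∑ j, (p : ZMod (p ^ n)) ^ (1 - ν j) * (d j : ZMod (p ^ n)) * (v j) ^ 2)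
          = (m' : ZMod (p ^ n))} := by
  subst hm
  have hp1 : 1 < p := hp.one_lt
  have hp0 : 0 < p := hp.pos
  haveI : NeZero (p ^ (n + 1)) := ⟨pow_ne_zero _ hp0.ne'⟩
  haveI : NeZero (p ^ n) := ⟨pow_ne_zero _ hp0.ne'⟩
  haveI : NeZero p := ⟨hp0.ne'⟩
  -- helper: castHom as val-cast
  have hcN : ∀ x : ZMod (p ^ (n + 1)),
      ZMod.castHom (dvd_pow_self p (Nat.succ_ne_zero n)) (ZMod p) x = ((x.val : ℕ) : ZMod p) :=
    fun x => by rw [ZMod.castHom_apply, ← ZMod.natCast_val]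
  have hcM : ∀ x : ZMod (p ^ n),
      ZMod.castHom (dvd_pow_self p (by omega : n ≠ 0)) (ZMod p) x = ((x.val : ℕ) : ZMod p) :=
    fun x => by rw [ZMod.castHom_apply, ← ZMod.natCast_val]
  have hvvN : ∀ x : ZMod (p ^ (n + 1)), ((x.val : ℕ) : ZMod (p ^ (n + 1))) = x :=
    fun x => by rw [ZMod.natCast_val, ZMod.cast_id]
  have hvvM : ∀ x : ZMod (p ^ n), ((x.val : ℕ) : ZMod (p ^ n)) = x :=
    fun x => by rw [ZMod.natCast_val, ZMod.cast_id]
  -- the raw maps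
  set F : (Fin r → ZMod (p ^ (n + 1))) → (Fin r → ZMod (p ^ n)) := fun v j =>
    if ν j = 0 then (((v j).val / p : ℕ) : ZMod (p ^ n)) else (((v j).val : ℕ) : ZMod (p ^ n))
    with hF
  set T : (Fin r → ZMod (p ^ (n + 1))) → ({j : Fin r // ν j = 1} → ZMod p) := fun v j =>
    (((v j.1).val / p ^ n : ℕ) : ZMod p) with hT
  set G : ({j : Fin r // ν j = 1} → ZMod p) → (Fin r → ZMod (p ^ n)) →
      (Fin r → ZMod (p ^ (n + 1))) := fun t w j =>
    if h : ν j = 0 then ((p * (w j).val : ℕ) : ZMod (p ^ (n + 1)))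
    else (((w j).val + p ^ n * (t ⟨j, by have := hν j; omega⟩).val : ℕ) : ZMod (p ^ (n + 1)))
    with hG
  -- val computations for G
  have P1a : ∀ t w j, ν j = 0 → (G t w j).val = p * (w j).val := by
    intro t w j h
    rw [hG]
    simp only [dif_pos h]
    refine ZMod.val_cast_of_lt ?_
    have h1 : (w j).val < p ^ n := ZMod.val_lt _
    calc p * (w j).val < p * p ^ n := (Nat.mul_lt_mul_left hp0).mpr h1
    _ = p ^ (n + 1) := (pow_succ' p n).symm
  have P1b : ∀ t w j (h : ν j = 1),
      (G t w j).val = (w j).val + p ^ n * (t ⟨j, h⟩).val := by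
    intro t w j h
    rw [hG]
    simp only [dif_neg (by omega : ¬ ν j = 0)]
    refine ZMod.val_cast_of_lt ?_
    have h1 : (w j).val < p ^ n := ZMod.val_lt _
    have h2 : (t ⟨j, h⟩).val < p := ZMod.val_lt _
    have h3 : (w j).val + p ^ n * (t ⟨j, h⟩).val < p ^ n * ((t ⟨j, h⟩).val + 1) := by
      rw [Nat.mul_add, Nat.mul_one]; omega
    calc (w j).val + p ^ n * (t ⟨j, h⟩).val < p ^ n * ((t ⟨j, h⟩).val + 1) := h3
    _ ≤ p ^ n * p := Nat.mul_le_mul_left _ (by omega)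
    _ = p ^ (n + 1) := (pow_succ p n).symm
  -- cast to ZMod p of G
  have C2 : ∀ t w j, ν j = 0 →
      ZMod.castHom (dvd_pow_self p (Nat.succ_ne_zero n)) (ZMod p) (G t w j) = 0 := by
    intro t w j h
    rw [hcN, P1a t w j h]
    simp [ZMod.natCast_self]
  have hpn0 : ((p ^ n : ℕ) : ZMod p) = 0 := by
    rw [ZMod.natCast_eq_zero_iff]
    exact dvd_pow_self p (by omega)
  have C3 : ∀ t w j (h : ν j = 1),
      ZMod.castHom (dvd_pow_self p (Nat.succ_ne_zero n)) (ZMod p) (G t w j)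
        = ZMod.castHom (dvd_pow_self p (by omega : n ≠ 0)) (ZMod p) (w j) := by
    intro t w j h
    rw [hcN, hcM, P1b t w j h]
    push_cast
    rw [show ((p:ZMod p)) ^ n = 0 by
      rw [show (p : ZMod p) = ((p:ℕ) : ZMod p) by push_cast; rfl, ZMod.natCast_self, zero_pow (by omega)]]
    ring
  -- sum condition transfer
  have C1 : ∀ t w,
      ((∑ j, (p : ZMod (p ^ (n + 1))) ^ (ν j) * (d j : ZMod (p ^ (n + 1))) * (G t w j) ^ 2)
        = (((p:ℤ) * m' : ℤ) : ZMod (p ^ (n + 1)))) ↔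
      ((∑ j, (p : ZMod (p ^ n)) ^ (1 - ν j) * (d j : ZMod (p ^ n)) * (w j) ^ 2)
        = (m' : ZMod (p ^ n))) := by
    intro t w
    rw [sumZMod p (p ^ (n+1)) r ν d (G t w) ((p:ℤ) * m'),
        sumZMod p (p ^ n) r (fun j => 1 - ν j) d w m']
    push_cast
    refine sumCong p hp0 n r ν hν d (fun j => ((G t w j).val : ℤ)) (fun j => ((w j).val : ℤ))
      ?_ ?_ m'
    · intro j h
      show ((G t w j).val : ℤ) = (p : ℤ) * (((fun j => ((w j).val : ℤ)) j))
      rw [P1a t w j h]; push_cast; ring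
    · intro j h
      refine ⟨((t ⟨j, h⟩).val : ℤ), ?_⟩
      show ((G t w j).val : ℤ) - ((w j).val : ℤ) = (p:ℤ)^n * ((t ⟨j, h⟩).val : ℤ)
      rw [P1b t w j h]; push_cast; ring
  -- left inverse
  have P3 : ∀ v : Fin r → ZMod (p ^ (n + 1)),
      (∀ j, ν j = 0 →
        ZMod.castHom (dvd_pow_self p (Nat.succ_ne_zero n)) (ZMod p) (v j) = 0) →
      G (T v) (F v) = v := by
    intro v hv
    funext j
    rcases Nat.le_one_iff_eq_zero_or_eq_one.mp (hν j) with h | h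
    · have hdvd : p ∣ (v j).val := by
        have := hv j h
        rw [hcN] at this
        exact (ZMod.natCast_eq_zero_iff _ _).mp this
      rw [hG]
      simp only [dif_pos h]
      rw [hF]
      simp only [if_pos h]
      have hlt : (v j).val / p < p ^ n := by
        refine Nat.div_lt_of_lt_mul ?_
        calc (v j).val < p ^ (n + 1) := ZMod.val_lt _
        _ = p * p ^ n := pow_succ' p n
      rw [ZMod.val_cast_of_lt hlt, Nat.mul_div_cancel' hdvd, hvvN]
    · rw [hG]
      simp only [dif_neg (by omega : ¬ ν j = 0)]
      rw [hF, hT]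
      simp only [if_neg (by omega : ¬ ν j = 0)]
      have h1 : (((v j).val : ℕ) : ZMod (p ^ n)).val = (v j).val % p ^ n := ZMod.val_natCast _ _
      have h2 : (v j).val / p ^ n < p := by
        refine Nat.div_lt_of_lt_mul ?_
        calc (v j).val < p ^ (n + 1) := ZMod.val_lt _
        _ = p ^ n * p := pow_succ p n
      rw [h1, ZMod.val_cast_of_lt h2, Nat.mod_add_div, hvvN]
  -- right inverses
  have P4F : ∀ t w, F (G t w) = w := by
    intro t w
    funext j
    rcases Nat.le_one_iff_eq_zero_or_eq_one.mp (hν j) with h | h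
    · rw [hF]
      simp only [if_pos h]
      rw [P1a t w j h, Nat.mul_div_cancel_left _ hp0, hvvM]
    · rw [hF]
      simp only [if_neg (by omega : ¬ ν j = 0)]
      rw [P1b t w j h]
      push_cast
      rw [show ((p:ZMod (p ^ n))) ^ n = 0 by
        rw [show (p : ZMod (p^n)) = ((p:ℕ) : ZMod (p^n)) by push_cast; rfl,
          ← Nat.cast_pow, ZMod.natCast_self]]
      rw [hvvM]
      ring
  have P4T : ∀ t w, T (G t w) = t := by
    intro t w
    funext j
    have hj := j.2
    show (((G t w j.1).val / p ^ n : ℕ) : ZMod p) = t j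
    rw [P1b t w j.1 hj]
    have h1 : (w j.1).val < p ^ n := ZMod.val_lt _
    have h2 : ((w j.1).val + p ^ n * (t ⟨j.1, hj⟩).val) / p ^ n = (t ⟨j.1, hj⟩).val := by
      rw [Nat.add_mul_div_left _ _ (pow_pos hp0 n), Nat.div_eq_of_lt h1, Nat.zero_add]
    rw [h2, ZMod.natCast_val, ZMod.cast_id]
  -- the equivalence
  have E : {v : Fin r → ZMod (p ^ (n + 1)) //
      ((∀ j, ν j = 0 →
          ZMod.castHom (dvd_pow_self p (Nat.succ_ne_zero n)) (ZMod p) (v j) = 0) ∧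
        (∃ j, ZMod.castHom (dvd_pow_self p (Nat.succ_ne_zero n)) (ZMod p) (v j) ≠ 0)) ∧
      (∑ j, (p : ZMod (p ^ (n + 1))) ^ (ν j) * (d j : ZMod (p ^ (n + 1))) * (v j) ^ 2)
        = (((p:ℤ) * m' : ℤ) : ZMod (p ^ (n + 1)))} ≃
      (({j : Fin r // ν j = 1} → ZMod p) ×
       {w : Fin r → ZMod (p ^ n) //
        (∃ j, 1 - ν j = 0 ∧
          ZMod.castHom (dvd_pow_self p (by omega : n ≠ 0)) (ZMod p) (w j) ≠ 0) ∧
        (∑ j, (p : ZMod (p ^ n)) ^ (1 - ν j) * (d j : ZMod (p ^ n)) * (w j) ^ 2)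
          = (m' : ZMod (p ^ n))}) := by
    have badG : ∀ t w,
        ((∃ j, 1 - ν j = 0 ∧
            ZMod.castHom (dvd_pow_self p (by omega : n ≠ 0)) (ZMod p) (w j) ≠ 0) ∧
          (∑ j, (p : ZMod (p ^ n)) ^ (1 - ν j) * (d j : ZMod (p ^ n)) * (w j) ^ 2)
            = (m' : ZMod (p ^ n))) ↔
        (((∀ j, ν j = 0 →
            ZMod.castHom (dvd_pow_self p (Nat.succ_ne_zero n)) (ZMod p) (G t w j) = 0) ∧
          (∃ j, ZMod.castHom (dvd_pow_self p (Nat.succ_ne_zero n)) (ZMod p) (G t w j) ≠ 0)) ∧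
        (∑ j, (p : ZMod (p ^ (n + 1))) ^ (ν j) * (d j : ZMod (p ^ (n + 1))) * (G t w j) ^ 2)
          = (((p:ℤ) * m' : ℤ) : ZMod (p ^ (n + 1)))) := by
      intro t w
      constructor
      · rintro ⟨⟨j, hj1, hj2⟩, hsum⟩
        have hj : ν j = 1 := by have := hν j; omega
        refine ⟨⟨fun j' hj' => C2 t w j' hj', ⟨j, ?_⟩⟩, (C1 t w).mpr hsum⟩
        rw [C3 t w j hj]; exact hj2
      · rintro ⟨⟨_, ⟨j, hj2⟩⟩, hsum⟩
        have hj : ν j = 1 := by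
          by_contra hc
          exact hj2 (C2 t w j (by have := hν j; omega))
        refine ⟨⟨j, by omega, ?_⟩, (C1 t w).mp hsum⟩
        rw [← C3 t w j hj]; exact hj2
    refine
      { toFun := fun v => (T v.1, ⟨F v.1, ?_⟩)
        invFun := fun x => ⟨G x.1 x.2.1, (badG x.1 x.2.1).mp x.2.2⟩
        left_inv := ?_
        right_inv := ?_ }
    · have hv := v.2
      rw [← P3 v.1 v.2.1.1] at hv
      exact (badG (T v.1) (F v.1)).mpr hv
    · intro v
      exact Subtype.ext (P3 v.1 v.2.1.1)
    · intro x
      refine Prod.ext (P4T x.1 x.2.1) (Subtype.ext (P4F x.1 x.2.1))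
  rw [Nat.card_congr E, Nat.card_prod, Nat.card_fun, Nat.card_zmod,
    Nat.card_eq_fintype_card, Fintype.card_subtype]
  congr 1
  congr 1
  have : (Finset.univ.filter (fun j => ν j = 1)) =
      (Finset.univ.filter (fun j => ν j = 0))ᶜ := by
    ext j
    simp only [Finset.mem_filter, Finset.mem_compl, Finset.mem_univ, true_and]
    have := hν j; omega
  rw [this, Finset.card_compl, Fintype.card_fin]
end

section
/- Let Q be a nondegenerate quadratic form on Z_p^r and p an odd prime. For any integer m with p² | m and any n ≥ 1, the zero-type solutions satisfy N^{zero}_m(p^{n+2}) = p^r · N_{m/p²}(p^n). Equivalently, the densities μ_p(m,n) := p^{−n(r−1)} N_m(p^n) satisfy μ^{zero}_p(m, n+2) = p^{2−r} μ_p(m/p², n). -/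
/-- Integer congruence lemma: if `x ≡ y` coordinatewise mod `c`, then `Q x ≡ Q y` mod `c`. -/
lemma stmt1_Q_congr {r : ℕ} (Q : QuadraticForm ℤ (Fin r → ℤ)) (c : ℤ)
    (x y : Fin r → ℤ) (h : ∀ j, c ∣ x j - y j) : c ∣ Q x - Q y := by
  set e : Fin r → ℤ := fun j => (x j - y j) / c with he
  have hx : x = y + c • e := by
    funext j
    simp only [Pi.add_apply, Pi.smul_apply, smul_eq_mul, he]
    rw [Int.mul_ediv_cancel' (h j)]
    ring
  have hpolar : Q (y + c • e) = Q y + Q (c • e) + QuadraticMap.polar Q y (c • e) := by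
    simp [QuadraticMap.polar]
  have h1 : Q (c • e) = c * c * Q e := by rw [QuadraticMap.map_smul, smul_eq_mul]
  have h2 : QuadraticMap.polar Q y (c • e) = c * QuadraticMap.polar Q y e := by
    rw [QuadraticMap.polar_smul_right, smul_eq_mul]
  rw [hx, hpolar, h1, h2]
  exact ⟨c * Q e + QuadraticMap.polar Q y e, by ring⟩

/-- If some lift of `v` solves `Q ≡ M mod p^N`, then the canonical lift by `val` does too. -/
lemma stmt1_val_lift {r : ℕ} (Q : QuadraticForm ℤ (Fin r → ℤ)) (p N : ℕ) [NeZero (p ^ N)]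
    (M : ℤ) (v : Fin r → ZMod (p ^ N))
    (h : ∃ w : Fin r → ℤ, (∀ j, ((w j : ZMod (p ^ N)) = v j)) ∧ (p : ℤ) ^ N ∣ Q w - M) :
    (p : ℤ) ^ N ∣ Q (fun j => ((v j).val : ℤ)) - M := by
  obtain ⟨w, hw, hdvd⟩ := h
  have hcong : ∀ j, (p : ℤ) ^ N ∣ ((v j).val : ℤ) - w j := by
    intro j
    have : ((((v j).val : ℤ) - w j : ℤ) : ZMod (p ^ N)) = 0 := by
      push_cast
      rw [hw j, ZMod.natCast_rightInverse (v j)]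
      ring
    have := (ZMod.intCast_zmod_eq_zero_iff_dvd _ _).mp this
    exact_mod_cast this
  have := stmt1_Q_congr Q ((p : ℤ) ^ N) _ w hcong
  have h2 : Q (fun j => ((v j).val : ℤ)) - M =
      (Q (fun j => ((v j).val : ℤ)) - Q w) + (Q w - M) := by ring
  rw [h2]
  exact dvd_add this hdvd

/-- Hanke's zero-type reduction: for a nondegenerate integral quadratic form `Q` of rank `r`
over `ℤ_p` (`p` odd) and `p² ∣ m` (`m = p² m'`), the number of zero-type solutions of
`Q(v) ≡ m (mod p^{n+2})` equals `p^r` times the number of all solutions of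
`Q(w) ≡ m/p² (mod p^n)`.  Solutions mod `p^N` are counted as residue classes
`v : (ZMod p^N)^r` admitting an integral lift `w` with `p^N ∣ Q(w) - m`; a solution is of
zero type when `v ≡ 0 (mod p)`. -/
theorem stmt_1 (p : ℕ) (hp : p.Prime) (hodd : p ≠ 2) (r : ℕ)
    (Q : QuadraticForm ℤ (Fin r → ℤ))
    (hQnd : ∀ v : Fin r → ℤ, (∀ w, QuadraticMap.polar Q v w = 0) → v = 0)
    (m m' : ℤ) (hm : m = (p : ℤ) ^ 2 * m') (n : ℕ) (hn : 1 ≤ n) :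
    Nat.card {v : Fin r → ZMod (p ^ (n + 2)) //
      (∀ j, ZMod.castHom (dvd_pow_self p (Nat.succ_ne_zero (n + 1))) (ZMod p) (v j) = 0) ∧
      ∃ w : Fin r → ℤ, (∀ j, ((w j : ZMod (p ^ (n + 2))) = v j)) ∧
        (p : ℤ) ^ (n + 2) ∣ Q w - m} =
    p ^ r * Nat.card {v : Fin r → ZMod (p ^ n) //
      ∃ w : Fin r → ℤ, (∀ j, ((w j : ZMod (p ^ n)) = v j)) ∧
        (p : ℤ) ^ n ∣ Q w - m'} := by
  haveI : Fact p.Prime := ⟨hp⟩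
  have hp0 : 0 < p := hp.pos
  have hp1 : 1 < p := hp.one_lt
  haveI : NeZero (p ^ (n + 2)) := ⟨pow_ne_zero _ hp.ne_zero⟩
  haveI : NeZero (p ^ n) := ⟨pow_ne_zero _ hp.ne_zero⟩
  haveI : NeZero (p ^ (n + 1)) := ⟨pow_ne_zero _ hp.ne_zero⟩
  have hpZ : ((p : ℤ)) ≠ 0 := by exact_mod_cast hp.ne_zero
  -- the equivalence
  set Zt := {v : Fin r → ZMod (p ^ (n + 2)) //
      (∀ j, ZMod.castHom (dvd_pow_self p (Nat.succ_ne_zero (n + 1))) (ZMod p) (v j) = 0) ∧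
      ∃ w : Fin r → ℤ, (∀ j, ((w j : ZMod (p ^ (n + 2))) = v j)) ∧
        (p : ℤ) ^ (n + 2) ∣ Q w - m} with hZt
  set Bt := {v : Fin r → ZMod (p ^ n) //
      ∃ w : Fin r → ℤ, (∀ j, ((w j : ZMod (p ^ n)) = v j)) ∧
        (p : ℤ) ^ n ∣ Q w - m'} with hBt
  -- zero-type means p divides the value
  have hdiv_val : ∀ (x : Zt) (j : Fin r), p ∣ (x.1 j).val := by
    rintro ⟨v, h0, hsol⟩ j
    have h1 : (((v j).val : ℕ) : ZMod p) = 0 := by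
      have := h0 j
      rwa [show v j = (((v j).val : ℕ) : ZMod (p ^ (n + 2))) from
        (ZMod.natCast_rightInverse (v j)).symm, map_natCast] at this
    exact (ZMod.natCast_eq_zero_iff _ _).mp h1
  -- divisibility transfer: p^(n+2) ∣ p^2 * t ↔ p^n ∣ t
  have hcanc : ∀ t : ℤ, (p : ℤ) ^ (n + 2) ∣ (p : ℤ) ^ 2 * t ↔ (p : ℤ) ^ n ∣ t := by
    intro t
    rw [show (p : ℤ) ^ (n + 2) = (p : ℤ) ^ 2 * (p : ℤ) ^ n by ring]
    exact mul_dvd_mul_iff_left (pow_ne_zero 2 hpZ)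
  -- Q(p•u) = p^2 Q(u)
  have hQp : ∀ u : Fin r → ℤ, Q (fun j => (p : ℤ) * u j) = (p : ℤ) ^ 2 * Q u := by
    intro u
    have : (fun j => (p : ℤ) * u j) = (p : ℤ) • u := by funext j; simp [smul_eq_mul]
    rw [this, QuadraticMap.map_smul, smul_eq_mul]; ring
  have E : Zt ≃ (Fin r → ZMod p) × Bt := by
    refine
      { toFun := fun x =>
          ⟨fun j => (((x.1 j).val / p ^ (n + 1) : ℕ) : ZMod p),
           ⟨fun j => (((x.1 j).val / p : ℕ) : ZMod (p ^ n)), ?_⟩⟩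
        invFun := fun y =>
          ⟨fun j => ((p * ((y.2.1 j).val + p ^ n * (y.1 j).val) : ℕ) : ZMod (p ^ (n + 2))),
           ?_, ?_⟩
        left_inv := ?_
        right_inv := ?_ }
    · -- forward: solution condition at level n
      refine ⟨fun j => (((x.1 j).val / p : ℕ) : ℤ), fun j => Int.cast_natCast _, ?_⟩
      have hval := stmt1_val_lift Q p (n + 2) m x.1 x.2.2
      have hpu : ∀ j, ((x.1 j).val : ℤ) = (p : ℤ) * (((x.1 j).val / p : ℕ) : ℤ) := by
        intro j
        have h := Nat.mul_div_cancel' (hdiv_val x j)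
        exact_mod_cast h.symm
      have heq : Q (fun j => ((x.1 j).val : ℤ)) =
          (p : ℤ) ^ 2 * Q (fun j => (((x.1 j).val / p : ℕ) : ℤ)) := by
        rw [← hQp]; exact congrArg Q (funext hpu)
      have h5 : (p : ℤ) ^ 2 * (Q (fun j => (((x.1 j).val / p : ℕ) : ℤ)) - m') =
          Q (fun j => ((x.1 j).val : ℤ)) - m := by linear_combination (-1 : ℤ) * heq + hm
      exact (hcanc _).mp (by rw [h5]; exact hval)
    · -- backward: zero type
      intro j
      have : (ZMod.castHom (dvd_pow_self p (Nat.succ_ne_zero (n + 1))) (ZMod p))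
          (((p * ((y.2.1 j).val + p ^ n * (y.1 j).val) : ℕ) : ZMod (p ^ (n + 2)))) = 0 := by
        rw [map_natCast]
        exact (ZMod.natCast_eq_zero_iff _ _).mpr (dvd_mul_right _ _)
      exact this
    · -- backward: solution condition at level n+2
      refine ⟨fun j => ((p * ((y.2.1 j).val + p ^ n * (y.1 j).val) : ℕ) : ℤ),
        fun j => by push_cast; ring, ?_⟩
      have hval := stmt1_val_lift Q p n m' y.2.1 y.2.2
      have hcong : (p : ℤ) ^ n ∣
          Q (fun j => (((y.2.1 j).val + p ^ n * (y.1 j).val : ℕ) : ℤ)) - m' := by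
        have := stmt1_Q_congr Q ((p : ℤ) ^ n)
          (fun j => (((y.2.1 j).val + p ^ n * (y.1 j).val : ℕ) : ℤ))
          (fun j => ((y.2.1 j).val : ℤ)) (fun j => ⟨((y.1 j).val : ℤ), by push_cast; ring⟩)
        have h2 : Q (fun j => (((y.2.1 j).val + p ^ n * (y.1 j).val : ℕ) : ℤ)) - m' =
            (Q (fun j => (((y.2.1 j).val + p ^ n * (y.1 j).val : ℕ) : ℤ)) -
              Q (fun j => ((y.2.1 j).val : ℤ))) + (Q (fun j => ((y.2.1 j).val : ℤ)) - m') := by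
          ring
        rw [h2]; exact dvd_add this hval
      have heq : Q (fun j => ((p * ((y.2.1 j).val + p ^ n * (y.1 j).val) : ℕ) : ℤ)) =
          (p : ℤ) ^ 2 * Q (fun j => (((y.2.1 j).val + p ^ n * (y.1 j).val : ℕ) : ℤ)) := by
        rw [← hQp]
        exact congrArg Q (funext fun j => by push_cast; ring)
      rw [heq, hm, ← mul_sub]
      exact (hcanc _).mpr hcong
    · -- left inverse
      rintro ⟨v, h0, hsol⟩
      apply Subtype.ext
      funext j
      have hlt : (v j).val < p ^ (n + 2) := ZMod.val_lt (v j)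
      have hdp : p ∣ (v j).val := hdiv_val ⟨v, h0, hsol⟩ j
      set a := (v j).val with ha
      have hu_lt : a / p < p ^ (n + 1) := by
        apply Nat.div_lt_of_lt_mul
        calc a < p ^ (n + 2) := hlt
        _ = p * p ^ (n + 1) := by ring
      have hdig_lt : a / p / p ^ n < p := by
        apply Nat.div_lt_of_lt_mul
        calc a / p < p ^ (n + 1) := hu_lt
        _ = p ^ n * p := by ring
      show ((p * (((((a / p : ℕ) : ZMod (p ^ n))).val) +
          p ^ n * (((a / p ^ (n + 1) : ℕ) : ZMod p)).val) : ℕ) : ZMod (p ^ (n + 2))) = v j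
      have h1 : (((a / p : ℕ) : ZMod (p ^ n))).val = a / p % p ^ n := ZMod.val_natCast _ _
      have h2 : a / p ^ (n + 1) = a / p / p ^ n := by
        rw [Nat.div_div_eq_div_mul]; congr 1; ring
      have h3 : (((a / p ^ (n + 1) : ℕ) : ZMod p)).val = a / p / p ^ n := by
        rw [h2, ZMod.val_natCast_of_lt hdig_lt]
      rw [h1, h3, Nat.mod_add_div (a / p) (p ^ n), Nat.mul_div_cancel' hdp]
      exact ZMod.natCast_rightInverse (v j)
    · -- right inverse
      rintro ⟨c, b, hb⟩
      have key : ∀ j, p * ((b j).val + p ^ n * (c j).val) < p ^ (n + 2) := by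
        intro j
        have h1 : (b j).val < p ^ n := ZMod.val_lt (b j)
        have h2 : (c j).val < p := ZMod.val_lt (c j)
        have h3 : p ^ n * ((c j).val + 1) ≤ p ^ n * p := Nat.mul_le_mul_left _ (by omega)
        have h4 : p ^ n * (c j).val + p ^ n ≤ p ^ (n + 1) := by
          rw [Nat.mul_add, Nat.mul_one] at h3
          calc p ^ n * (c j).val + p ^ n ≤ p ^ n * p := h3
            _ = p ^ (n + 1) := (pow_succ p n).symm
        have hu : (b j).val + p ^ n * (c j).val < p ^ (n + 1) := by omega
        have := (Nat.mul_lt_mul_left hp0).mpr hu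
        calc p * ((b j).val + p ^ n * (c j).val) < p * p ^ (n + 1) := this
          _ = p ^ (n + 2) := by ring
      refine Prod.ext ?_ (Subtype.ext ?_)
      · funext j
        show (((p * ((b j).val + p ^ n * (c j).val) : ℕ) : ZMod (p ^ (n+2))).val / p ^ (n + 1) : ℕ)
            = c j
        rw [ZMod.val_natCast_of_lt (key j)]
        have h1 : (b j).val < p ^ n := ZMod.val_lt (b j)
        have e1 : p * ((b j).val + p ^ n * (c j).val) / p ^ (n + 1)
            = ((b j).val + p ^ n * (c j).val) / p ^ n := by
          rw [show p ^ (n + 1) = p * p ^ n by ring, Nat.mul_div_mul_left _ _ hp0]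
        have e2 : ((b j).val + p ^ n * (c j).val) / p ^ n = (c j).val := by
          rw [Nat.add_mul_div_left _ _ (Nat.pow_pos hp0), Nat.div_eq_of_lt h1]
          omega
        rw [e1, e2]
        exact ZMod.natCast_rightInverse (c j)
      · funext j
        show (((p * ((b j).val + p ^ n * (c j).val) : ℕ) : ZMod (p ^ (n+2))).val / p : ℕ) = b j
        rw [ZMod.val_natCast_of_lt (key j), Nat.mul_div_cancel_left _ hp0,
          Nat.cast_add, Nat.cast_mul, ZMod.natCast_self, zero_mul, add_zero]
        exact ZMod.natCast_rightInverse (b j)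
  rw [Nat.card_congr E, Nat.card_prod]
  congr 1
  simp [Nat.card_eq_fintype_card]
end

section
/- Let Q be a quadratic form of rank r ≥ 5 over Z_p such that there exists a basis in which Q((x_1,...,x_r)) = x_1 x_2 + Q_1(x_3,...,x_r) for some quadratic form Q_1 in r−2 variables. Then for every prime p, every m ∈ Z, and every n ≥ 1, the local density μ_p(m,n) = p^{−n(r−1)}·|{v ∈ (Z/p^n)^r : Q(v) ≡ m mod p^n}| satisfies μ_p(m,n) ≥ 1/2. -/
/-- Uniform lower bound for local densities of quadratic forms of rank `r = s + 2 ≥ 5`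
splitting off a hyperbolic plane: writing `Q(x) = x₁x₂ + Q₁(x₃,…,x_r)` in a suitable basis,
the local density `μ_p(m,n) = p^{-n(r-1)} N_m(p^n)` satisfies `μ_p(m,n) ≥ 1/2`, i.e.
`p^{n(r-1)} ≤ 2 N_m(p^n)`.  Solutions mod `p^n` are residue classes admitting an
integral lift solving the congruence. -/
theorem stmt_2 (p : ℕ) (hp : p.Prime) (s : ℕ) (hs : 3 ≤ s)
    (Q₁ : QuadraticForm ℤ (Fin s → ℤ)) (m : ℤ) (n : ℕ) (hn : 1 ≤ n) :
    p ^ (n * (s + 1)) ≤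
      2 * Nat.card {v : (Fin 2 ⊕ Fin s) → ZMod (p ^ n) //
        ∃ w : (Fin 2 ⊕ Fin s) → ℤ, (∀ j, ((w j : ZMod (p ^ n)) = v j)) ∧
          (p : ℤ) ^ n ∣ (w (Sum.inl 0) * w (Sum.inl 1) + Q₁ (fun i => w (Sum.inr i)) - m)} := by
  set N := p ^ n with hN
  haveI : Fact p.Prime := ⟨hp⟩
  haveI : NeZero N := ⟨pow_ne_zero n hp.pos.ne'⟩
  set S := {v : (Fin 2 ⊕ Fin s) → ZMod N //
        ∃ w : (Fin 2 ⊕ Fin s) → ℤ, (∀ j, ((w j : ZMod N) = v j)) ∧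
          (p : ℤ) ^ n ∣ (w (Sum.inl 0) * w (Sum.inl 1) + Q₁ (fun i => w (Sum.inr i)) - m)}
    with hS
  -- cast of val
  have hcast : ∀ x : ZMod N, (((x.val : ℤ) : ZMod N) = x) := by
    intro x
    push_cast
    simp [ZMod.natCast_val, ZMod.cast_id]
  -- build the injection
  have key : ∀ (u : (ZMod N)ˣ) (y : Fin s → ZMod N),
      ∃ v : S, (v : (Fin 2 ⊕ Fin s) → ZMod N) (Sum.inl 0) = (u : ZMod N) ∧
        ∀ i, (v : (Fin 2 ⊕ Fin s) → ZMod N) (Sum.inr i) = y i := by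
    intro u y
    set a : ℤ := ((u : ZMod N).val : ℤ) with ha
    set y' : Fin s → ℤ := fun i => ((y i).val : ℤ) with hy'
    set c : ℤ := m - Q₁ y' with hc
    set b : ℤ := ((((u : ZMod N))⁻¹ * (c : ZMod N)).val : ℤ) with hb
    have haZ : ((a : ZMod N)) = (u : ZMod N) := hcast _
    have hbZ : ((b : ZMod N)) = ((u : ZMod N))⁻¹ * (c : ZMod N) := hcast _
    have hy'Z : ∀ i, ((y' i : ZMod N)) = y i := fun i => hcast _
    set w : (Fin 2 ⊕ Fin s) → ℤ := Sum.elim (fun j => if j = 0 then a else b) y' with hw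
    set v : (Fin 2 ⊕ Fin s) → ZMod N := fun j => ((w j : ZMod N)) with hv
    have hdvd : (p : ℤ) ^ n ∣ (w (Sum.inl 0) * w (Sum.inl 1) + Q₁ (fun i => w (Sum.inr i)) - m) := by
      have h0 : w (Sum.inl 0) = a := rfl
      have h1 : w (Sum.inl 1) = b := rfl
      have h2 : (fun i => w (Sum.inr i)) = y' := rfl
      rw [h0, h1, h2]
      have : ((a * b + Q₁ y' - m : ℤ) : ZMod N) = 0 := by
        push_cast
        rw [haZ, hbZ]
        rw [← mul_assoc, ZMod.mul_inv_of_unit _ u.isUnit, one_mul, hc]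
        push_cast
        ring
      exact_mod_cast (ZMod.intCast_zmod_eq_zero_iff_dvd _ N).mp this
    refine ⟨⟨v, w, fun j => rfl, hdvd⟩, ?_, ?_⟩
    · show ((w (Sum.inl 0) : ZMod N)) = (u : ZMod N)
      exact haZ
    · intro i
      exact hy'Z i
  choose f hf1 hf2 using key
  have hinj : Function.Injective (fun x : (ZMod N)ˣ × (Fin s → ZMod N) => f x.1 x.2) := by
    intro x x' h
    simp only at h
    obtain ⟨u, y⟩ := x; obtain ⟨u', y'⟩ := x'
    have h0 := (hf1 u y).symm.trans (congrArg (fun z : S => (z : (Fin 2 ⊕ Fin s) → ZMod N) (Sum.inl 0)) h) |>.trans (hf1 u' y')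
    have h1 : y = y' := by
      funext i
      exact (hf2 u y i).symm.trans
        ((congrArg (fun z : S => (z : (Fin 2 ⊕ Fin s) → ZMod N) (Sum.inr i)) h).trans (hf2 u' y' i))
    exact Prod.ext (Units.ext h0) h1
  have hcard : Nat.card ((ZMod N)ˣ × (Fin s → ZMod N)) ≤ Nat.card S :=
    Nat.card_le_card_of_injective _ hinj
  have hcard1 : Nat.card ((ZMod N)ˣ × (Fin s → ZMod N)) = N.totient * N ^ s := by
    simp [Nat.card_prod, Nat.card_eq_fintype_card, Nat.card_fun,
      ZMod.card_units_eq_totient, ZMod.card]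
  have htot : N ≤ 2 * N.totient := by
    rw [hN, Nat.totient_prime_pow hp hn]
    have h2 : p ≤ 2 * (p - 1) := by
      have := hp.two_le; omega
    calc p ^ n = p ^ (n - 1) * p := by
          rw [← pow_succ]; congr 1; omega
      _ ≤ p ^ (n - 1) * (2 * (p - 1)) := Nat.mul_le_mul_left _ h2
      _ = 2 * (p ^ (n - 1) * (p - 1)) := by ring
  calc p ^ (n * (s + 1)) = N * N ^ s := by
        rw [hN, ← pow_mul, ← pow_add]
        congr 1
        ring
    _ ≤ 2 * N.totient * N ^ s := Nat.mul_le_mul_right _ htot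
    _ = 2 * (N.totient * N ^ s) := by ring
    _ ≤ 2 * Nat.card S := by
        rw [← hcard1]; exact Nat.mul_le_mul_left _ hcard
end

section
/- Let Q be a nondegenerate quadratic form on R^{b+2} of signature (b,2) with b ≥ 1, written in an orthogonal basis as Q(x_1,x_2,y_1,...,y_b) = −x_1² − x_2² + y_1² + ... + y_b², with Lebesgue measure μ normalized so that an integral lattice L of discriminant |L^∨/L| has covolume 1 (so dμ = (2^{1+b/2}/√|L^∨/L|) dx dy). Define, for a real T > 0, Ω_{≤T} = {λ : Q(λ) = 1, x_1² + x_2² ≤ T} and its measure μ_∞(Ω_{≤T}) = lim_{ε→0} (1/2ε) μ({λ : |Q(λ) − 1| < ε, x_1² + x_2² < T}). Then μ_∞(Ω_{≤T}) = (2π)^{k} ((1+T)^{b/2} − 1) / (√|L^∨/L| Γ(k)), where k = 1 + b/2. -/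
/-!
Integrate out the positive-definite coordinates first: for fixed `x` with `s = x₁² + x₂² < T`,
the slice `{y : |‖y‖² - s - 1| < ε}` is a spherical shell of volume
`V_b ((1+s+ε)^{b/2} - (1+s-ε)^{b/2})`, where `V_b` is the volume of the unit ball. Since
`x ↦ ‖x‖²` pushes Lebesgue measure on `ℝ²` forward to `π` times Lebesgue measure on `(0, ∞)`, the
remaining integral over the disc is `π V_b / k · (G(1+ε) - G(1-ε))` with `G c = (c+T)^k - c^k`.
Dividing by `2ε` gives a symmetric difference quotient of `G`, which tends to
`G'(1) = k ((1+T)^{b/2} - 1)`.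
-/

open Filter Topology MeasureTheory Real Set

lemma sqrt_pow_eq_rpow {R : ℝ} (hR : 0 ≤ R) (n : ℕ) : √R ^ n = R ^ ((n : ℝ) / 2) := by
  rw [sqrt_eq_rpow, ← rpow_natCast, ← rpow_mul hR, one_div_mul_eq_div]

noncomputable def unitBallVolume (n : ℕ) : ℝ := √π ^ n / Gamma (n / 2 + 1)

lemma unitBallVolume_nonneg (n : ℕ) : 0 ≤ unitBallVolume n := by
  unfold unitBallVolume; positivity

lemma unitBallVolume_two : unitBallVolume 2 = π := by
  norm_num [unitBallVolume, sq_sqrt pi_pos.le, Gamma_two]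

section SumSq

variable {ι : Type*} [Fintype ι]

lemma preimage_toLp_ball_zero {R : ℝ} (hR : 0 ≤ R) :
    WithLp.toLp 2 ⁻¹' Metric.ball (0 : EuclideanSpace ℝ ι) √R = {y | ∑ i, y i ^ 2 < R} := by
  rw [EuclideanSpace.ball_zero_eq _ (sqrt_nonneg R), sq_sqrt hR]
  rfl

lemma preimage_toLp_closedBall_zero {R : ℝ} (hR : 0 ≤ R) :
    WithLp.toLp 2 ⁻¹' Metric.closedBall (0 : EuclideanSpace ℝ ι) √R = {y | ∑ i, y i ^ 2 ≤ R} := by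
  rw [EuclideanSpace.closedBall_zero_eq _ (sqrt_nonneg R), sq_sqrt hR]
  rfl

lemma volume_sum_sq_lt [Nonempty ι] {R : ℝ} (hR : 0 ≤ R) :
    volume {y : ι → ℝ | ∑ i, y i ^ 2 < R} =
      ENNReal.ofReal (R ^ ((Fintype.card ι : ℝ) / 2) * unitBallVolume (Fintype.card ι)) := by
  rw [← preimage_toLp_ball_zero hR, (PiLp.volume_preserving_toLp ι).measure_preimage
    measurableSet_ball.nullMeasurableSet, EuclideanSpace.volume_ball,
    ← ENNReal.ofReal_pow (sqrt_nonneg R), ← ENNReal.ofReal_mul (by positivity),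
    sqrt_pow_eq_rpow hR,
    unitBallVolume]

lemma volume_sum_sq_le [Nonempty ι] {R : ℝ} (hR : 0 ≤ R) :
    volume {y : ι → ℝ | ∑ i, y i ^ 2 ≤ R} =
      ENNReal.ofReal (R ^ ((Fintype.card ι : ℝ) / 2) * unitBallVolume (Fintype.card ι)) := by
  rw [← volume_sum_sq_lt hR, ← preimage_toLp_ball_zero hR, ← preimage_toLp_closedBall_zero hR,
    (PiLp.volume_preserving_toLp ι).measure_preimage measurableSet_ball.nullMeasurableSet,
    (PiLp.volume_preserving_toLp ι).measure_preimage measurableSet_closedBall.nullMeasurableSet,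
    Measure.addHaar_closedBall_eq_addHaar_ball]

lemma volume_sum_sq_mem_Ioo [Nonempty ι] {a c : ℝ} (ha : 0 ≤ a) (hac : a < c) :
    volume {y : ι → ℝ | ∑ i, y i ^ 2 ∈ Ioo a c} =
      ENNReal.ofReal ((c ^ ((Fintype.card ι : ℝ) / 2) - a ^ ((Fintype.card ι : ℝ) / 2)) *
        unitBallVolume (Fintype.card ι)) := by
  have hdiff : {y : ι → ℝ | ∑ i, y i ^ 2 ∈ Ioo a c} =
      {y | ∑ i, y i ^ 2 < c} \ {y | ∑ i, y i ^ 2 ≤ a} := by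
    ext y; simp only [mem_Ioo, mem_ofPred_eq, Set.mem_sdiff, not_le, and_comm]
  have hsub : {y : ι → ℝ | ∑ i, y i ^ 2 ≤ a} ⊆ {y | ∑ i, y i ^ 2 < c} :=
    fun y hy => lt_of_le_of_lt hy hac
  rw [hdiff, measure_sdiff hsub
    (measurableSet_le (by fun_prop) measurable_const).nullMeasurableSet
    (by rw [volume_sum_sq_le ha]; exact ENNReal.ofReal_ne_top),
    volume_sum_sq_lt (ha.trans hac.le), volume_sum_sq_le ha,
    ← ENNReal.ofReal_sub _ (mul_nonneg (by positivity) (unitBallVolume_nonneg _)), sub_mul]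

end SumSq

lemma MeasureTheory.Measure.ext_of_Iic' {α : Type*} [TopologicalSpace α] {m : MeasurableSpace α}
    [SecondCountableTopology α] [LinearOrder α] [OrderTopology α] [BorelSpace α] [NoMinOrder α]
    (μ ν : Measure α) (hμ : ∀ a, μ (Iic a) ≠ ⊤) (h : ∀ a, μ (Iic a) = ν (Iic a)) : μ = ν := by
  have hIoc {a b : α} (hab : a < b) (ρ : Measure α) (hρ : ρ (Iic a) ≠ ⊤) :
      ρ (Ioc a b) = ρ (Iic b) - ρ (Iic a) := by
    rw [← Iic_sdiff_Iic, measure_sdiff (Iic_subset_Iic.2 hab.le) nullMeasurableSet_Iic hρ]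
  refine Measure.ext_of_Ioc' μ ν (fun a b hab => ?_) (fun a b hab => ?_)
  · exact ((measure_mono Ioc_subset_Iic_self).trans_lt (hμ b).lt_top).ne
  · rw [hIoc hab μ (hμ a), hIoc hab ν (h a ▸ hμ a), h, h]

lemma volume_sum_sq_fin_two_le (R : ℝ) :
    volume {x : Fin 2 → ℝ | ∑ i, x i ^ 2 ≤ R} = ENNReal.ofReal (π * R) := by
  rcases lt_or_ge R 0 with hR | hR
  · have hempty : {x : Fin 2 → ℝ | ∑ i, x i ^ 2 ≤ R} = ∅ :=
      eq_empty_of_forall_notMem fun x hx => hR.not_ge ((Finset.sum_nonneg fun i _ =>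
        sq_nonneg (x i)).trans hx)
    rw [hempty, measure_empty, ENNReal.ofReal_of_nonpos (by nlinarith [pi_pos])]
  · rw [volume_sum_sq_le hR, Fintype.card_fin, unitBallVolume_two]
    norm_num [mul_comm]

lemma map_sum_sq_volume_fin_two :
    volume.map (fun x : Fin 2 → ℝ => ∑ i, x i ^ 2) =
      ENNReal.ofReal π • volume.restrict (Ioi 0) := by
  have hmap (R : ℝ) : volume.map (fun x : Fin 2 → ℝ => ∑ i, x i ^ 2) (Iic R) =
      ENNReal.ofReal (π * R) := by
    rw [Measure.map_apply (by fun_prop) measurableSet_Iic]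
    exact volume_sum_sq_fin_two_le R
  refine Measure.ext_of_Iic' _ _ (fun R => hmap R ▸ ENNReal.ofReal_ne_top) fun R => ?_
  rw [hmap, Measure.smul_apply, Measure.restrict_apply measurableSet_Iic, Iic_inter_Ioi,
    volume_Ioc, smul_eq_mul, ← ENNReal.ofReal_mul pi_pos.le, sub_zero]

lemma lintegral_indicator_sum_sq_fin_two {g : ℝ → ℝ} (hg : Continuous g) {T : ℝ} (hT : 0 ≤ T)
    (hg0 : ∀ u ∈ Ioo 0 T, 0 ≤ g u) :
    ∫⁻ x : Fin 2 → ℝ, (Iio T).indicator (fun u => ENNReal.ofReal (g u)) (∑ i, x i ^ 2) =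
      ENNReal.ofReal (π * ∫ u in 0..T, g u) := by
  rw [← lintegral_map (f := (Iio T).indicator fun u => ENNReal.ofReal (g u))
    ((ENNReal.measurable_ofReal.comp hg.measurable).indicator measurableSet_Iio)
    (by fun_prop), map_sum_sq_volume_fin_two, lintegral_smul_measure,
    lintegral_indicator measurableSet_Iio, Measure.restrict_restrict measurableSet_Iio,
    Iio_inter_Ioi, ← ofReal_integral_eq_lintegral_ofReal
      (hg.continuousOn.integrableOn_Icc.mono_set Ioo_subset_Icc_self)
      ((ae_restrict_iff' measurableSet_Ioo).2 (Eventually.of_forall hg0)),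
    ← integral_Ioc_eq_integral_Ioo, ← intervalIntegral.integral_of_le hT, smul_eq_mul,
    ← ENNReal.ofReal_mul pi_pos.le]

lemma HasDerivAt.tendsto_symmetric_slope {f : ℝ → ℝ} {f' x : ℝ} (hf : HasDerivAt f f' x) :
    Tendsto (fun h => (f (x + h) - f (x - h)) / (2 * h)) (𝓝[≠] 0) (𝓝 f') := by
  have hφ : HasDerivAt (fun h => f (x + h) - f (x - h)) (f' - -f') 0 :=
    (HasDerivAt.comp_const_add x 0 (by rwa [add_zero])).sub
      (HasDerivAt.comp_const_sub x 0 (by rwa [sub_zero]))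
  have := (hasDerivAt_iff_tendsto_slope_zero.1 hφ).const_mul (1 / 2)
  convert this using 2 with h
  · simp only [zero_add, add_zero, sub_zero, sub_self, smul_eq_mul]
    ring
  · ring

lemma integral_add_rpow (c T : ℝ) {m : ℝ} (hm : -1 < m) :
    ∫ u in 0..T, (c + u) ^ m = ((c + T) ^ (m + 1) - c ^ (m + 1)) / (m + 1) := by
  rw [intervalIntegral.integral_comp_add_left (fun x => x ^ m), add_zero,
    integral_rpow (Or.inl hm)]

lemma volume_hyperboloid_shell_eq_lintegral {ι κ : Type*} [Fintype ι] [Fintype κ] [Nonempty κ]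
    (T : ℝ) {ε : ℝ} (hε0 : 0 < ε) (hε1 : ε ≤ 1) :
    volume {v : (ι → ℝ) × (κ → ℝ) |
        |(-(∑ i, (v.1 i) ^ 2) + ∑ j, (v.2 j) ^ 2) - 1| < ε ∧ (∑ i, (v.1 i) ^ 2) < T} =
      ∫⁻ x : ι → ℝ, (Iio T).indicator (fun u => ENNReal.ofReal
        (((1 + ε + u) ^ ((Fintype.card κ : ℝ) / 2) - (1 - ε + u) ^ ((Fintype.card κ : ℝ) / 2)) *
          unitBallVolume (Fintype.card κ))) (∑ i, x i ^ 2) := by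
  have hS : MeasurableSet {v : (ι → ℝ) × (κ → ℝ) |
      |(-(∑ i, (v.1 i) ^ 2) + ∑ j, (v.2 j) ^ 2) - 1| < ε ∧ (∑ i, (v.1 i) ^ 2) < T} := by
    rw [ofPred_and]
    exact (measurableSet_lt (by fun_prop) measurable_const).inter
      (measurableSet_lt (by fun_prop) measurable_const)
  rw [Measure.volume_eq_prod, Measure.prod_apply hS]
  refine lintegral_congr fun x => ?_
  have hx0 : 0 ≤ ∑ i, x i ^ 2 := Finset.sum_nonneg fun i _ => sq_nonneg (x i)
  by_cases hx : ∑ i, x i ^ 2 < T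
  · rw [indicator_of_mem (mem_Iio.2 hx), ← volume_sum_sq_mem_Ioo (by linarith) (by linarith)]
    congr 1
    ext y
    simp only [mem_preimage, mem_ofPred_eq, mem_Ioo, abs_sub_lt_iff, hx, and_true]
    constructor <;> rintro ⟨h₁, h₂⟩ <;> constructor <;> linarith
  · rw [indicator_of_notMem (notMem_Iio.2 (not_lt.1 hx)), 
      ← measure_empty (μ := (volume : Measure (κ → ℝ)))]
    congr 1
    ext y
    simp [hx]

lemma volume_hyperboloid_shell {κ : Type*} [Fintype κ] [Nonempty κ] {T ε : ℝ} (hT : 0 ≤ T)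
    (hε0 : 0 < ε) (hε1 : ε ≤ 1) :
    volume.real {v : (Fin 2 → ℝ) × (κ → ℝ) |
        |(-(∑ i, (v.1 i) ^ 2) + ∑ j, (v.2 j) ^ 2) - 1| < ε ∧ (∑ i, (v.1 i) ^ 2) < T} =
      π * unitBallVolume (Fintype.card κ) / ((Fintype.card κ : ℝ) / 2 + 1) *
        ((1 + ε + T) ^ ((Fintype.card κ : ℝ) / 2 + 1) - (1 + ε) ^ ((Fintype.card κ : ℝ) / 2 + 1)
          - ((1 - ε + T) ^ ((Fintype.card κ : ℝ) / 2 + 1)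
            - (1 - ε) ^ ((Fintype.card κ : ℝ) / 2 + 1))) := by
  set m : ℝ := (Fintype.card κ : ℝ) / 2
  have hm : 0 ≤ m := by positivity
  have hcont (c : ℝ) : Continuous fun u : ℝ => (c + u) ^ m :=
    (continuous_rpow_const hm).comp (continuous_const_add c)
  have hg0 : ∀ u ∈ Icc 0 T,
      0 ≤ ((1 + ε + u) ^ m - (1 - ε + u) ^ m) * unitBallVolume (Fintype.card κ) :=
    fun u hu => mul_nonneg (sub_nonneg.2 (rpow_le_rpow (by linarith [hu.1]) (by linarith) hm))
      (unitBallVolume_nonneg _)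
  rw [measureReal_def, volume_hyperboloid_shell_eq_lintegral T hε0 hε1,
    lintegral_indicator_sum_sq_fin_two
      (g := fun u => ((1 + ε + u) ^ m - (1 - ε + u) ^ m) * unitBallVolume (Fintype.card κ))
      (((hcont _).sub (hcont _)).mul continuous_const) hT
      fun u hu => hg0 u (Ioo_subset_Icc_self hu),
    ENNReal.toReal_ofReal (mul_nonneg pi_pos.le (intervalIntegral.integral_nonneg hT hg0)),
    intervalIntegral.integral_mul_const, intervalIntegral.integral_sub
      ((hcont _).intervalIntegrable _ _) ((hcont _).intervalIntegrable _ _),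
    integral_add_rpow _ _ (by linarith), integral_add_rpow _ _ (by linarith)]
  ring

lemma pi_mul_unitBallVolume (n : ℕ) :
    π * unitBallVolume n = π ^ ((n : ℝ) / 2 + 1) / Gamma ((n : ℝ) / 2 + 1) := by
  rw [unitBallVolume, sqrt_pow_eq_rpow pi_pos.le, rpow_add pi_pos, rpow_one]
  ring

theorem stmt_4_general (b : ℕ) (hb : 1 ≤ b) (D : ℝ) (T : ℝ) (hT : 0 < T) :
    Tendsto (fun ε : ℝ =>
      (2 : ℝ) ^ (1 + (b : ℝ) / 2) / Real.sqrt D *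
        (volume {v : (Fin 2 → ℝ) × (Fin b → ℝ) |
          |(-(∑ i, (v.1 i) ^ 2) + ∑ i, (v.2 i) ^ 2) - 1| < ε ∧
            (∑ i, (v.1 i) ^ 2) < T}).toReal / (2 * ε))
      (nhdsWithin 0 (Set.Ioi 0))
      (nhds ((2 * Real.pi) ^ (1 + (b : ℝ) / 2) * ((1 + T) ^ ((b : ℝ) / 2) - 1) /
        (Real.sqrt D * Real.Gamma (1 + (b : ℝ) / 2)))) := by
  have : Nonempty (Fin b) := ⟨⟨0, hb⟩⟩
  set m : ℝ := (b : ℝ) / 2 with hm_def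
  have hG : HasDerivAt (fun c => (c + T) ^ (m + 1) - c ^ (m + 1))
      ((m + 1) * ((1 + T) ^ m - 1)) 1 := by
    have hpow (x : ℝ) : HasDerivAt (fun c : ℝ => c ^ (m + 1)) ((m + 1) * x ^ m) x := by
      simpa using hasDerivAt_rpow_const (x := x) (p := m + 1)
        (Or.inr (le_add_of_nonneg_left (by positivity)))
    exact ((HasDerivAt.comp_add_const 1 T (hpow (1 + T))).sub (hpow 1)).congr_deriv
      (by rw [one_rpow]; ring)
  have hlimit : (2 * π) ^ (1 + m) * ((1 + T) ^ m - 1) / (√D * Gamma (1 + m)) =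
      2 ^ (1 + m) / √D * (π * unitBallVolume b / (m + 1)) * ((m + 1) * ((1 + T) ^ m - 1)) := by
    have hm : m + 1 ≠ 0 := by positivity
    rw [pi_mul_unitBallVolume, ← hm_def, mul_rpow zero_le_two pi_pos.le, add_comm 1 m]
    field_simp
  rw [hlimit]
  refine ((hG.tendsto_symmetric_slope.mono_left (nhdsGT_le_nhdsNE 0)).const_mul _).congr' ?_
  filter_upwards [Ioo_mem_nhdsGT one_pos] with ε hε
  rw [← measureReal_def, volume_hyperboloid_shell hT.le hε.1 hε.2.le, Fintype.card_fin]
  ring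

/-- Volume of `Ω_{≤T}` on the quadric `{Q = 1}` for `Q` of signature `(b,2)` in the diagonal
form `Q(x,y) = -x₁² - x₂² + y₁² + ⋯ + y_b²`, with Lebesgue measure normalized by the factor
`2^{1+b/2}/√D` (so that a lattice with `|L^∨/L| = D` has covolume one):
`μ_∞(Ω_{≤T}) = lim_{ε→0⁺} (1/2ε) μ{|Q-1| < ε, x₁²+x₂² < T}
            = (2π)^k ((1+T)^{b/2} - 1)/(√D Γ(k))`, where `k = 1 + b/2`. -/
theorem stmt_4 (b : ℕ) (hb : 1 ≤ b) (D : ℝ) (hD : 0 < D) (T : ℝ) (hT : 0 < T) :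
    Tendsto (fun ε : ℝ =>
      (2 : ℝ) ^ (1 + (b : ℝ) / 2) / Real.sqrt D *
        (volume {v : (Fin 2 → ℝ) × (Fin b → ℝ) |
          |(-(∑ i, (v.1 i) ^ 2) + ∑ i, (v.2 i) ^ 2) - 1| < ε ∧
            (∑ i, (v.1 i) ^ 2) < T}).toReal / (2 * ε))
      (nhdsWithin 0 (Set.Ioi 0))
      (nhds ((2 * Real.pi) ^ (1 + (b : ℝ) / 2) * ((1 + T) ^ ((b : ℝ) / 2) - 1) /
        (Real.sqrt D * Real.Gamma (1 + (b : ℝ) / 2)))) :=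
  stmt_4_general b hb D T hT
end

section
/- With notation as in the volume computation of Ω_{≤T} (quadratic space of signature (b,2), k = 1 + b/2, measure μ_∞ on the quadric L_{R,1} = {Q = 1}): for every real s > 0, the integral over L_{R,1} of the function h_s(λ) = (1/(1 − Q(λ_x)))^{k−1+s} with respect to μ_∞ equals (2π)^{1+b/2} / (Γ(b/2) √|L^∨/L| · s). Equivalently, ∫_{L_{R,1}} h_s dμ_∞ = (b/4)·|c(m)|/(s·a(m)) where a(m) = |c(m)| Γ(k) √|L^∨/L| / (2 (2π)^k). -/
open Filter Topology MeasureTheory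


lemma shell_vol (b : ℕ) (c ε : ℝ) (hc : 1 ≤ c) (hε : 0 < ε) (hε1 : ε < 1) :
    (volume {y : Fin b → ℝ | |(∑ i, (y i)^2) - c| < ε}).toReal
      = (Real.sqrt Real.pi ^ b / Real.Gamma ((b:ℝ)/2 + 1)) *
        ((c+ε) ^ ((b:ℝ)/2) - (c-ε) ^ ((b:ℝ)/2)) := by
  have hce : (0:ℝ) < c - ε := by linarith
  have hce' : (0:ℝ) < c + ε := by linarith
  rcases Nat.eq_zero_or_pos b with rfl | hb
  · -- b = 0 case : sum empty = 0, |0 - c| = c ≥ 1 > ε, set empty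
    have : {y : Fin 0 → ℝ | |(∑ i : Fin 0, (y i)^2) - c| < ε} = ∅ := by
      ext y
      simp only [Finset.univ_eq_empty, Finset.sum_empty, Set.mem_setOf_eq, Set.mem_empty_iff_false,
        iff_false, not_lt, zero_sub, abs_neg, abs_of_nonneg (by linarith : (0:ℝ) ≤ c)]
      linarith
    rw [this]
    simp [Real.Gamma_one]
  have hmeas : MeasurableSet {y : Fin b → ℝ | |(∑ i, (y i)^2) - c| < ε} := by
    apply measurableSet_lt
    · exact ((Finset.measurable_sum _ fun i _ => (measurable_pi_apply i).pow_const 2).sub_const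
        c).abs
    · exact measurable_const
  rw [← (EuclideanSpace.volume_preserving_symm_measurableEquiv_toLp (Fin b)).measure_preimage
    hmeas.nullMeasurableSet]
  have hset : (MeasurableEquiv.toLp 2 (Fin b → ℝ)).symm ⁻¹'
      {y : Fin b → ℝ | |(∑ i, (y i)^2) - c| < ε}
      = Metric.ball (0 : EuclideanSpace ℝ (Fin b)) (Real.sqrt (c+ε)) \
        Metric.closedBall 0 (Real.sqrt (c-ε)) := by
    ext x
    have hx2 : ‖x‖^2 = ∑ i, (x i)^2 := by
      rw [EuclideanSpace.norm_eq, Real.sq_sqrt (Finset.sum_nonneg fun i _ => sq_nonneg _)]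
      simp [sq_abs]
    have h1 : ‖x‖ < Real.sqrt (c+ε) ↔ ∑ i, (x i)^2 < c+ε := by
      rw [Real.lt_sqrt (norm_nonneg x), hx2]
    have h2 : ‖x‖ ≤ Real.sqrt (c-ε) ↔ ∑ i, (x i)^2 ≤ c-ε := by
      rw [Real.le_sqrt (norm_nonneg x) hce.le, hx2]
    simp only [Set.mem_preimage, Set.mem_setOf_eq, Set.mem_diff, Metric.mem_ball,
      Metric.mem_closedBall, dist_zero_right, abs_lt, h1, h2,
      show ∀ i, (MeasurableEquiv.toLp 2 (Fin b → ℝ)).symm x i = x i from fun _ => rfl]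
    constructor
    · rintro ⟨ha, hb'⟩; exact ⟨by linarith, by intro h; linarith⟩
    · rintro ⟨ha, hb'⟩; rw [not_le] at hb'; exact ⟨by linarith, by linarith⟩
  haveI : Nonempty (Fin b) := Fin.pos_iff_nonempty.mp hb
  rw [hset]
  have hsub : Metric.closedBall (0 : EuclideanSpace ℝ (Fin b)) (Real.sqrt (c-ε)) ⊆
      Metric.ball 0 (Real.sqrt (c+ε)) :=
    Metric.closedBall_subset_ball (Real.sqrt_lt_sqrt hce.le (by linarith))
  rw [measure_diff hsub measurableSet_closedBall.nullMeasurableSet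
    (measure_closedBall_lt_top).ne]
  rw [ENNReal.toReal_sub_of_le (measure_mono hsub) (measure_ball_lt_top).ne]
  rw [EuclideanSpace.volume_ball, EuclideanSpace.volume_closedBall]
  have hsq : ∀ t : ℝ, 0 < t → (Real.sqrt t) ^ b = t ^ ((b:ℝ)/2) := by
    intro t ht
    rw [Real.sqrt_eq_rpow, ← Real.rpow_natCast (t ^ ((1:ℝ)/2)) b, ← Real.rpow_mul ht.le]
    congr 1
    ring
  have hKnn : (0:ℝ) ≤ Real.sqrt Real.pi ^ (Fintype.card (Fin b)) /
      Real.Gamma ((Fintype.card (Fin b) : ℝ)/2 + 1) := by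
    apply div_nonneg (pow_nonneg (Real.sqrt_nonneg _) _)
    exact (Real.Gamma_pos_of_pos (by positivity)).le
  simp only [ENNReal.toReal_mul, ENNReal.toReal_pow, ENNReal.toReal_ofReal, Real.sqrt_nonneg,
    ENNReal.toReal_ofReal hKnn]
  simp only [Fintype.card_fin]
  rw [hsq _ hce', hsq _ hce]
  push_cast
  ring


lemma fubini_step (b : ℕ) (p : ℝ) (ε : ℝ) :
    ∫ v in {v : (Fin 2 → ℝ) × (Fin b → ℝ) |
        |(-(∑ i, (v.1 i)^2) + ∑ i, (v.2 i)^2) - 1| < ε},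
      (1 + ∑ i, (v.1 i)^2) ^ (-p)
    = ∫ x : Fin 2 → ℝ, (1 + ∑ i, (x i)^2) ^ (-p) *
        (volume {y : Fin b → ℝ | |(∑ i, (y i)^2) - (1 + ∑ i, (x i)^2)| < ε}).toReal := by
  set S : Set ((Fin 2 → ℝ) × (Fin b → ℝ)) :=
    {v | |(-(∑ i, (v.1 i)^2) + ∑ i, (v.2 i)^2) - 1| < ε} with hS
  have msum2 : Measurable fun x : Fin 2 → ℝ => ∑ i, (x i)^2 :=
    Finset.measurable_sum _ fun i _ => (measurable_pi_apply i).pow_const 2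
  have msumb : Measurable fun y : Fin b → ℝ => ∑ i, (y i)^2 :=
    Finset.measurable_sum _ fun i _ => (measurable_pi_apply i).pow_const 2
  have hSm : MeasurableSet S := by
    apply measurableSet_lt _ measurable_const
    exact (((msum2.comp measurable_fst).neg.add (msumb.comp measurable_snd)).sub_const 1).abs
  have hgc : Continuous fun x : Fin 2 → ℝ => (1 + ∑ i, (x i)^2) ^ (-p) := by
    apply Continuous.rpow_const
    · exact continuous_const.add (continuous_finset_sum _ fun i _ =>
        (continuous_apply i).pow 2)
    · intro x; left; positivity
  have hg : Measurable fun x : Fin 2 → ℝ => (1 + ∑ i, (x i)^2) ^ (-p) := hgc.measurable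
  have hgpos : ∀ x : Fin 2 → ℝ, 0 < (1 + ∑ i, (x i)^2) ^ (-p) := fun x =>
    Real.rpow_pos_of_pos (by positivity) _
  have hsec : ∀ x : Fin 2 → ℝ, Prod.mk x ⁻¹' S =
      {y : Fin b → ℝ | |(∑ i, (y i)^2) - (1 + ∑ i, (x i)^2)| < ε} := by
    intro x; ext y
    simp only [hS, Set.mem_preimage, Set.mem_setOf_eq]
    rw [show -(∑ i, (x i)^2) + (∑ i, (y i)^2) - 1 = (∑ i, (y i)^2) - (1 + ∑ i, (x i)^2) by ring]
  have hsecm : ∀ x : Fin 2 → ℝ, MeasurableSet {y : Fin b → ℝ | |(∑ i, (y i)^2) - (1 + ∑ i, (x i)^2)| < ε} :=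
    fun x => measurableSet_lt ((msumb.sub_const _).abs) measurable_const
  have hfin : ∀ x : Fin 2 → ℝ,
      volume {y : Fin b → ℝ | |(∑ i, (y i)^2) - (1 + ∑ i, (x i)^2)| < ε} ≠ ⊤ := by
    intro x
    set c := 1 + ∑ i, (x i)^2
    have : {y : Fin b → ℝ | |(∑ i, (y i)^2) - c| < ε} ⊆
        Metric.closedBall 0 (Real.sqrt (c + ε)) := by
      intro y hy
      simp only [Set.mem_setOf_eq, abs_lt] at hy
      rw [Metric.mem_closedBall, dist_zero_right]
      have hnn : 0 ≤ ∑ i, (y i)^2 := Finset.sum_nonneg fun i _ => sq_nonneg _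
      have hle : ∑ i, (y i)^2 ≤ c + ε := by linarith [hy.2]
      calc ‖y‖ ≤ Real.sqrt (∑ i, (y i)^2) := by
            rw [pi_norm_le_iff_of_nonneg (Real.sqrt_nonneg _)]
            intro i
            rw [Real.norm_eq_abs, ← Real.sqrt_sq_eq_abs]
            exact Real.sqrt_le_sqrt (Finset.single_le_sum (fun j _ => sq_nonneg (y j))
              (Finset.mem_univ i))
        _ ≤ Real.sqrt (c + ε) := Real.sqrt_le_sqrt hle
    exact ne_top_of_le_ne_top measure_closedBall_lt_top.ne (measure_mono this)
  have hmv : Measurable fun x : Fin 2 → ℝ =>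
      volume {y : Fin b → ℝ | |(∑ i, (y i)^2) - (1 + ∑ i, (x i)^2)| < ε} := by
    simpa only [hsec] using measurable_measure_prodMk_left (ν := (volume : Measure (Fin b → ℝ))) hSm
  have hGm : Measurable fun v : (Fin 2 → ℝ) × (Fin b → ℝ) => (1 + ∑ i, (v.1 i)^2) ^ (-p) :=
    hg.comp measurable_fst
  -- LHS to lintegral
  rw [← MeasureTheory.integral_indicator hSm]
  rw [MeasureTheory.integral_eq_lintegral_of_nonneg_ae
    (Filter.Eventually.of_forall fun v => Set.indicator_nonneg (fun v _ => (hgpos v.1).le) v)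
    (hGm.indicator hSm).aestronglyMeasurable]
  rw [MeasureTheory.integral_eq_lintegral_of_nonneg_ae
    (Filter.Eventually.of_forall fun x => mul_nonneg (hgpos x).le ENNReal.toReal_nonneg)
    (hg.mul hmv.ennreal_toReal).aestronglyMeasurable]
  congr 1
  have hind : ∀ v : (Fin 2 → ℝ) × (Fin b → ℝ),
      ENNReal.ofReal (S.indicator (fun v => (1 + ∑ i, (v.1 i)^2) ^ (-p)) v)
      = S.indicator (fun v => ENNReal.ofReal ((1 + ∑ i, (v.1 i)^2) ^ (-p))) v := by
    intro v
    by_cases hv : v ∈ S <;> simp [hv]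
  rw [lintegral_congr hind]
  rw [MeasureTheory.Measure.volume_eq_prod]
  have hFm : Measurable (S.indicator
      (fun v : (Fin 2 → ℝ) × (Fin b → ℝ) => ENNReal.ofReal ((1 + ∑ i, (v.1 i)^2) ^ (-p)))) :=
    (ENNReal.measurable_ofReal.comp hGm).indicator hSm
  rw [MeasureTheory.lintegral_prod _ hFm.aemeasurable]
  apply lintegral_congr
  intro x
  have : ∀ y : Fin b → ℝ, S.indicator
      (fun v : (Fin 2 → ℝ) × (Fin b → ℝ) => ENNReal.ofReal ((1 + ∑ i, (v.1 i)^2) ^ (-p))) (x, y)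
      = ({y : Fin b → ℝ | |(∑ i, (y i)^2) - (1 + ∑ i, (x i)^2)| < ε}).indicator
        (fun _ => ENNReal.ofReal ((1 + ∑ i, (x i)^2) ^ (-p))) y := by
    intro y
    by_cases hy : (x, y) ∈ S
    · have : y ∈ Prod.mk x ⁻¹' S := hy
      rw [hsec x] at this
      rw [Set.indicator_of_mem hy, Set.indicator_of_mem this]
    · have : y ∉ Prod.mk x ⁻¹' S := hy
      rw [hsec x] at this
      rw [Set.indicator_of_notMem hy, Set.indicator_of_notMem this]
  rw [lintegral_congr this, lintegral_indicator (hsecm x) _, setLIntegral_const,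
    ← ENNReal.ofReal_toReal (hfin x), ← ENNReal.ofReal_mul (hgpos x).le,
    ENNReal.ofReal_toReal (hfin x)]


lemma int1d (s : ℝ) (hs : 0 < s) :
    ∫ r in Set.Ioi (0:ℝ), r * (1 + r^2) ^ (-(1+s)) = 1/(2*s) := by
  have hderiv : ∀ t ∈ Set.Ici (0:ℝ), HasDerivAt
      (fun t : ℝ => -(1/(2*s)) * (1 + t^2) ^ (-s)) (t * (1 + t^2) ^ (-(1+s))) t := by
    intro t _
    have h1 : HasDerivAt (fun t : ℝ => 1 + t^2) (2*t) t := by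
      simpa using (hasDerivAt_pow 2 t).const_add 1
    have h2 : HasDerivAt (fun t : ℝ => (1 + t^2) ^ (-s))
        (2*t * (-s) * (1 + t^2) ^ (-s - 1)) t :=
      HasDerivAt.rpow_const h1 (Or.inl (by positivity))
    have := h2.const_mul (-(1/(2*s)))
    refine this.congr_deriv ?_
    have : -s - 1 = -(1+s) := by ring
    rw [this]
    field_simp
  have htend : Tendsto (fun t : ℝ => -(1/(2*s)) * (1 + t^2) ^ (-s)) atTop (𝓝 0) := by
    have h1 : Tendsto (fun t : ℝ => 1 + t^2) atTop atTop :=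
      tendsto_atTop_add_const_left _ 1 (tendsto_pow_atTop two_ne_zero)
    have h2 : Tendsto (fun t : ℝ => (1 + t^2) ^ (-s)) atTop (𝓝 0) :=
      (tendsto_rpow_neg_atTop hs).comp h1
    simpa using h2.const_mul (-(1/(2*s)))
  have hpos : ∀ t ∈ Set.Ioi (0:ℝ), 0 ≤ t * (1 + t^2) ^ (-(1+s)) := by
    intro t ht
    have := Real.rpow_pos_of_pos (show (0:ℝ) < 1 + t^2 by positivity) (-(1+s))
    exact mul_nonneg (le_of_lt ht) this.le
  have := integral_Ioi_of_hasDerivAt_of_nonneg' hderiv hpos htend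
  rw [this]
  norm_num [Real.rpow_natCast]

lemma int2d (s : ℝ) (hs : 0 < s) :
    ∫ x : Fin 2 → ℝ, (1 + ∑ i, (x i)^2) ^ (-(1+s)) = Real.pi / s := by
  have he := (EuclideanSpace.volume_preserving_symm_measurableEquiv_toLp (Fin 2))
  rw [← he.integral_comp (MeasurableEquiv.toLp 2 (Fin 2 → ℝ)).symm.measurableEmbedding]
  have hnorm : ∀ x : EuclideanSpace ℝ (Fin 2),
      (1 + ∑ i, ((MeasurableEquiv.toLp 2 (Fin 2 → ℝ)).symm x i)^2) ^ (-(1+s))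
        = (1 + ‖x‖^2) ^ (-(1+s)) := by
    intro x
    congr 2
    rw [EuclideanSpace.norm_eq, Real.sq_sqrt (Finset.sum_nonneg fun i _ => sq_nonneg _)]
    exact (Finset.sum_congr rfl fun i _ => by rw [Real.norm_eq_abs, sq_abs]; rfl).symm
  rw [integral_congr_ae (Filter.Eventually.of_forall hnorm)]
  rw [MeasureTheory.integral_fun_norm_addHaar (volume : Measure (EuclideanSpace ℝ (Fin 2)))
    (fun r => (1 + r^2) ^ (-(1+s)))]
  have hdim : Module.finrank ℝ (EuclideanSpace ℝ (Fin 2)) = 2 := by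
    simp [finrank_euclideanSpace]
  rw [hdim]
  have hball : ((volume (Metric.ball (0 : EuclideanSpace ℝ (Fin 2)) 1)).toReal) = Real.pi := by
    rw [EuclideanSpace.volume_ball]
    simp only [Fintype.card_fin]
    rw [show ((2:ℕ):ℝ)/2 + 1 = 2 by norm_num, Real.Gamma_two]
    rw [show Real.sqrt Real.pi ^ 2 = Real.pi from Real.sq_sqrt Real.pi_pos.le]
    simp [ENNReal.toReal_ofReal Real.pi_pos.le]
  rw [show volume.real (Metric.ball (0 : EuclideanSpace ℝ (Fin 2)) 1) = Real.pi from hball]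
  have : ∫ y in Set.Ioi (0:ℝ), y ^ (2 - 1) • (1 + y^2) ^ (-(1+s)) = 1/(2*s) := by
    simpa using int1d s hs
  rw [this]
  rw [nsmul_eq_mul, smul_eq_mul]
  field_simp
  ring

lemma integ2d (s : ℝ) (hs : 0 < s) :
    Integrable (fun x : Fin 2 → ℝ => (1 + ∑ i, (x i)^2) ^ (-(1+s))) := by
  have hE : Integrable (fun x : EuclideanSpace ℝ (Fin 2) => (1 + ‖x‖^2) ^ (-(1+s))) := by
    have h := integrable_rpow_neg_one_add_norm_sq
      (E := EuclideanSpace ℝ (Fin 2)) (μ := volume) (r := 2*(1+s)) (by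
        rw [finrank_euclideanSpace]; simp; linarith)
    have : -(2*(1+s))/2 = -(1+s) := by ring
    rwa [this] at h
  have he := (EuclideanSpace.volume_preserving_symm_measurableEquiv_toLp (Fin 2))
  rw [← he.integrable_comp_emb (MeasurableEquiv.toLp 2 (Fin 2 → ℝ)).symm.measurableEmbedding]
  have : ((fun x : Fin 2 → ℝ => (1 + ∑ i, (x i)^2) ^ (-(1+s))) ∘
      (MeasurableEquiv.toLp 2 (Fin 2 → ℝ)).symm)
      = fun x : EuclideanSpace ℝ (Fin 2) => (1 + ‖x‖^2) ^ (-(1+s)) := by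
    ext x
    simp only [Function.comp_apply]
    congr 2
    rw [EuclideanSpace.norm_eq, Real.sq_sqrt (Finset.sum_nonneg fun i _ => sq_nonneg _)]
    exact Finset.sum_congr rfl fun i _ => by rw [Real.norm_eq_abs, sq_abs]; rfl
  rw [this]
  exact hE


lemma slope_tendsto (k c : ℝ) (hk : 0 < k) (hc : 1 ≤ c) :
    Tendsto (fun ε : ℝ => ((c+ε) ^ k - (c-ε) ^ k) / (2*ε)) (nhdsWithin 0 (Set.Ioi 0))
      (𝓝 (k * c ^ (k-1))) := by
  have hc0 : (0:ℝ) < c := by linarith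
  set φ : ℝ → ℝ := fun t => (c+t) ^ k - (c-t) ^ k with hφ
  have hder : HasDerivAt φ (2 * (k * c ^ (k-1))) 0 := by
    have h1 : HasDerivAt (fun t : ℝ => (c+t) ^ k) (1 * k * c ^ (k-1)) 0 := by
      have := ((hasDerivAt_id (0:ℝ)).const_add c).rpow_const (p := k) (Or.inl (by simpa using hc0.ne'))
      simpa using this
    have h2 : HasDerivAt (fun t : ℝ => (c-t) ^ k) ((-1) * k * c ^ (k-1)) 0 := by
      have hin : HasDerivAt (fun t : ℝ => c - t) (-1) 0 := by
        simpa using (hasDerivAt_id (0:ℝ)).const_sub c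
      have := hin.rpow_const (p := k) (Or.inl (by simpa using hc0.ne'))
      simpa using this
    have := h1.sub h2
    refine this.congr_deriv ?_
    ring
  have hslope := hasDerivAt_iff_tendsto_slope.mp hder
  have hmono : nhdsWithin (0:ℝ) (Set.Ioi 0) ≤ nhdsWithin 0 {(0:ℝ)}ᶜ :=
    nhdsWithin_mono 0 (fun x hx => ne_of_gt hx)
  have h3 : Tendsto (fun ε : ℝ => φ ε / ε) (nhdsWithin 0 (Set.Ioi 0))
      (𝓝 (2 * (k * c ^ (k-1)))) := by
    apply Tendsto.congr _ (hslope.mono_left hmono)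
    intro ε
    rw [slope_def_field, hφ]
    simp [div_eq_mul_inv]
  have h4 := h3.div_const 2
  rw [mul_div_cancel_left₀ _ (two_ne_zero)] at h4
  apply Tendsto.congr _ h4
  intro ε
  rw [div_div, hφ]
  ring_nf

lemma slope_bound (k c ε : ℝ) (hk : 1/2 ≤ k) (hc : 1 ≤ c) (hε : 0 < ε) (hε2 : ε ≤ 1/2) :
    ((c+ε) ^ k - (c-ε) ^ k) / (2*ε) ≤ k * 2 ^ k * c ^ (k-1) := by
  have hk0 : (0:ℝ) < k := by linarith
  have hlo : (0:ℝ) < c - ε := by linarith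
  obtain ⟨ξ, hξ, hξeq⟩ := exists_hasDerivAt_eq_slope (fun t => t ^ k) (fun t => k * t ^ (k-1))
    (show c - ε < c + ε by linarith)
    (by
      apply ContinuousOn.rpow_const continuousOn_id
      intro x hx
      right
      linarith)
    (fun x hx => by
      have hx0 : (0:ℝ) < x := lt_trans hlo hx.1
      have := (hasDerivAt_id x).rpow_const (p := k) (Or.inl hx0.ne')
      simpa [mul_comm] using this)
  have hsub : c + ε - (c - ε) = 2*ε := by ring
  rw [hsub] at hξeq
  rw [← hξeq]
  have hξlo : c/2 ≤ ξ := by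
    have := hξ.1
    linarith
  have hξhi : ξ ≤ 2*c := by
    have := hξ.2
    linarith
  have hξ0 : (0:ℝ) < ξ := lt_of_lt_of_le (by linarith) hξlo
  have key : ξ ^ (k-1) ≤ 2 ^ k * c ^ (k-1) := by
    rcases le_total 1 k with h1 | h1
    · calc ξ ^ (k-1) ≤ (2*c) ^ (k-1) := Real.rpow_le_rpow hξ0.le hξhi (by linarith)
        _ = 2 ^ (k-1) * c ^ (k-1) := Real.mul_rpow (by norm_num) (by linarith)
        _ ≤ 2 ^ k * c ^ (k-1) := by
            apply mul_le_mul_of_nonneg_right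
              (Real.rpow_le_rpow_of_exponent_le (by norm_num) (by linarith))
              (Real.rpow_nonneg (by linarith) _)
    · calc ξ ^ (k-1) ≤ (c/2) ^ (k-1) :=
          Real.rpow_le_rpow_of_nonpos (by linarith) hξlo (by linarith)
        _ = (2⁻¹) ^ (k-1) * c ^ (k-1) := by
            rw [div_eq_inv_mul, Real.mul_rpow (by norm_num) (by linarith)]
        _ = 2 ^ (1-k) * c ^ (k-1) := by
            rw [← Real.rpow_neg_one (2:ℝ), ← Real.rpow_mul (by norm_num : (0:ℝ) ≤ 2),
              show (-1:ℝ)*(k-1) = 1-k by ring]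
        _ ≤ 2 ^ k * c ^ (k-1) := by
            apply mul_le_mul_of_nonneg_right
              (Real.rpow_le_rpow_of_exponent_le (by norm_num) (by linarith))
              (Real.rpow_nonneg (by linarith) _)
  calc k * ξ ^ (k-1) ≤ k * (2 ^ k * c ^ (k-1)) :=
        mul_le_mul_of_nonneg_left key hk0.le
    _ = k * 2 ^ k * c ^ (k-1) := by ring

lemma slope_nonneg (k c ε : ℝ) (hk : 0 ≤ k) (hc : 1 ≤ c) (hε : 0 < ε) (hε2 : ε ≤ 1/2) :
    0 ≤ ((c+ε) ^ k - (c-ε) ^ k) / (2*ε) := by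
  apply div_nonneg _ (by linarith)
  have : (c-ε) ^ k ≤ (c+ε) ^ k := Real.rpow_le_rpow (by linarith) (by linarith) hk
  linarith

/-- Integral of `h_s(λ) = (1/(1-Q(λ_x)))^{k-1+s}` over the quadric `{Q = 1}` against the
limit measure `μ_∞`: with `Q(x,y) = -x₁²-x₂²+∑ y_i²` of signature `(b,2)`, `k = 1 + b/2`,
and the normalization factor `2^{1+b/2}/√D`, for every `s > 0`
`lim_{ε→0⁺} (2^{1+b/2}/√D)/(2ε) ∫_{|Q-1|<ε} (1+x₁²+x₂²)^{-(k-1+s)} = (2π)^{1+b/2}/(Γ(b/2)·√D·s)`. -/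
theorem stmt_5 (b : ℕ) (hb : 1 ≤ b) (D : ℝ) (hD : 0 < D) (s : ℝ) (hs : 0 < s) :
    Tendsto (fun ε : ℝ =>
      ((2 : ℝ) ^ (1 + (b : ℝ) / 2) / Real.sqrt D) / (2 * ε) *
        ∫ v in {v : (Fin 2 → ℝ) × (Fin b → ℝ) |
            |(-(∑ i, (v.1 i) ^ 2) + ∑ i, (v.2 i) ^ 2) - 1| < ε},
          (1 + ∑ i, (v.1 i) ^ 2) ^ (-(((1 + (b : ℝ) / 2) - 1) + s)))
      (nhdsWithin 0 (Set.Ioi 0))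
      (nhds ((2 * Real.pi) ^ (1 + (b : ℝ) / 2) /
        (Real.Gamma ((b : ℝ) / 2) * Real.sqrt D * s))) := by
  simp only [show -(((1 + (b:ℝ)/2) - 1) + s) = -(((b:ℝ)/2) + s) from by ring]
  set k : ℝ := (b : ℝ) / 2 with hkdef
  have hk0 : 0 < k := by
    have : (1:ℝ) ≤ (b:ℝ) := by exact_mod_cast hb
    rw [hkdef]; linarith
  have hkhalf : 1/2 ≤ k := by
    have : (1:ℝ) ≤ (b:ℝ) := by exact_mod_cast hb
    rw [hkdef]; linarith
  set F : (Fin 2 → ℝ) → ℝ := fun x => 1 + ∑ i, (x i)^2 with hFdef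
  have hF1 : ∀ x, 1 ≤ F x := fun x => by
    have : 0 ≤ ∑ i, (x i)^2 := Finset.sum_nonneg fun i _ => sq_nonneg _
    simp only [hFdef]; linarith
  have hF0 : ∀ x, 0 < F x := fun x => lt_of_lt_of_le one_pos (hF1 x)
  have hFc : Continuous F :=
    continuous_const.add (continuous_finset_sum _ fun i _ => (continuous_apply i).pow 2)
  set g : (Fin 2 → ℝ) → ℝ := fun x => (F x) ^ (-(k + s)) with hgdef
  have hgpos : ∀ x, 0 < g x := fun x => Real.rpow_pos_of_pos (hF0 x) _
  have hgc : Continuous g := hFc.rpow_const fun x => Or.inl (hF0 x).ne'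
  set K : ℝ := Real.sqrt Real.pi ^ b / Real.Gamma (k + 1) with hKdef
  set A : ℝ := (2 : ℝ) ^ (1 + k) / Real.sqrt D with hAdef
  set ψ : ℝ → (Fin 2 → ℝ) → ℝ :=
    fun ε x => g x * (((F x + ε) ^ k - (F x - ε) ^ k) / (2*ε)) with hψdef
  set bound : (Fin 2 → ℝ) → ℝ := fun x => (k * 2 ^ k) * (F x) ^ (-(1+s)) with hbdef
  have hcomb : ∀ x, g x * (k * (F x) ^ (k - 1)) = k * (F x) ^ (-(1+s)) := by
    intro x
    have : g x = F x ^ (-(k + s)) := rfl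
    rw [this, show -(1+s) = -(k+s) + (k-1) by ring, Real.rpow_add (hF0 x)]
    ring
  have hmem : Set.Ioo (0:ℝ) (1/2) ∈ nhdsWithin (0:ℝ) (Set.Ioi 0) :=
    Ioo_mem_nhdsGT_of_mem (by norm_num : (0:ℝ) ∈ Set.Ico (0:ℝ) (1/2:ℝ))
  have hDCT : Tendsto (fun ε => ∫ x, ψ ε x) (nhdsWithin 0 (Set.Ioi 0))
      (𝓝 (∫ x, g x * (k * (F x) ^ (k-1)))) := by
    apply tendsto_integral_filter_of_dominated_convergence bound
    · filter_upwards [hmem] with ε hε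
      have hc : Continuous (ψ ε) := by
        apply hgc.mul
        apply Continuous.div_const
        apply Continuous.sub
        · exact (hFc.add (continuous_const)).rpow_const fun x =>
            Or.inl (by show F x + ε ≠ 0; nlinarith [hF1 x, hε.1])
        · exact (hFc.sub (continuous_const)).rpow_const fun x =>
            Or.inl (by show F x - ε ≠ 0; nlinarith [hF1 x, hε.2])
      exact hc.aestronglyMeasurable
    · filter_upwards [hmem] with ε hε
      apply Filter.Eventually.of_forall
      intro x
      have h1 := slope_bound k (F x) ε hkhalf (hF1 x) hε.1 hε.2.le
      have h2 := slope_nonneg k (F x) ε hk0.le (hF1 x) hε.1 hε.2.le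
      rw [Real.norm_eq_abs, abs_of_nonneg (mul_nonneg (hgpos x).le h2)]
      calc g x * (((F x + ε) ^ k - (F x - ε) ^ k) / (2*ε))
          ≤ g x * (k * 2^k * (F x)^(k-1)) := mul_le_mul_of_nonneg_left h1 (hgpos x).le
        _ = 2^k * (g x * (k * (F x)^(k-1))) := by ring
        _ = 2^k * (k * (F x)^(-(1+s))) := by rw [hcomb x]
        _ = bound x := by show _ = (k * 2^k) * (F x) ^ (-(1+s)); ring
    · show Integrable bound
      have := (integ2d s hs).const_mul (k * 2^k)
      exact this
    · apply Filter.Eventually.of_forall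
      intro x
      exact (slope_tendsto k (F x) hk0 (hF1 x)).const_mul (g x)
  have hval : ∫ x, g x * (k * (F x) ^ (k-1)) = k * (Real.pi / s) := by
    rw [show (fun x => g x * (k * (F x) ^ (k-1))) = fun x => k * (F x)^(-(1+s)) from
      funext hcomb]
    rw [MeasureTheory.integral_const_mul]
    rw [show ∫ x, (F x)^(-(1+s)) = Real.pi / s from int2d s hs]
  rw [hval] at hDCT
  have hmain := hDCT.const_mul (A*K)
  have heq : (fun ε => (A*K) * ∫ x, ψ ε x) =ᶠ[nhdsWithin (0:ℝ) (Set.Ioi 0)]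
      (fun ε : ℝ =>
        ((2 : ℝ) ^ (1 + k) / Real.sqrt D) / (2 * ε) *
        ∫ v in {v : (Fin 2 → ℝ) × (Fin b → ℝ) |
            |(-(∑ i, (v.1 i) ^ 2) + ∑ i, (v.2 i) ^ 2) - 1| < ε},
          (1 + ∑ i, (v.1 i) ^ 2) ^ (-(k + s))) := by
    filter_upwards [hmem] with ε hε
    rw [fubini_step b (k+s) ε]
    have hpt : ∀ x : Fin 2 → ℝ, (1 + ∑ i, (x i)^2) ^ (-(k+s)) *
        (volume {y : Fin b → ℝ | |(∑ i, (y i)^2) - (1 + ∑ i, (x i)^2)| < ε}).toReal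
        = (K * (2*ε)) * ψ ε x := by
      intro x
      rw [shell_vol b (1 + ∑ i, (x i)^2) ε (hF1 x) hε.1 (by linarith [hε.2])]
      show (F x) ^ (-(k+s)) * (K * ((F x + ε) ^ k - (F x - ε) ^ k))
        = (K * (2*ε)) * (g x * (((F x + ε) ^ k - (F x - ε) ^ k) / (2*ε)))
      have hgx : g x = (F x) ^ (-(k+s)) := rfl
      rw [hgx]
      have h2ε : (2*ε) ≠ 0 := by have := hε.1; positivity
      have hε0 : ε ≠ 0 := hε.1.ne'
      field_simp
    rw [show (fun x : Fin 2 → ℝ => (1 + ∑ i, (x i)^2) ^ (-(k+s)) *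
        (volume {y : Fin b → ℝ | |(∑ i, (y i)^2) - (1 + ∑ i, (x i)^2)| < ε}).toReal)
        = fun x => (K * (2*ε)) * ψ ε x from funext hpt]
    rw [MeasureTheory.integral_const_mul]
    have h2ε : (2*ε) ≠ 0 := by have := hε.1; positivity
    have hε0 : ε ≠ 0 := hε.1.ne'
    rw [hAdef]
    field_simp
  have hfinal : (A*K) * (k * (Real.pi / s))
      = (2 * Real.pi) ^ (1 + k) / (Real.Gamma k * Real.sqrt D * s) := by
    have hsqpi : Real.sqrt Real.pi ^ b = Real.pi ^ k := by
      rw [Real.sqrt_eq_rpow, ← Real.rpow_natCast (Real.pi ^ ((1:ℝ)/2)) b,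
        ← Real.rpow_mul Real.pi_pos.le]
      congr 1
      rw [hkdef]; ring
    have hGam : Real.Gamma (k + 1) = k * Real.Gamma k := by
      rw [Real.Gamma_add_one hk0.ne']
    have hmulrpow : (2 * Real.pi) ^ (1 + k) = 2 ^ (1+k) * Real.pi ^ (1+k) :=
      Real.mul_rpow (by norm_num) Real.pi_pos.le
    have hpipow : Real.pi ^ (1+k) = Real.pi * Real.pi ^ k := by
      rw [Real.rpow_add Real.pi_pos, Real.rpow_one]
    have hGk : Real.Gamma k ≠ 0 := (Real.Gamma_pos_of_pos hk0).ne'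
    have hsD : Real.sqrt D ≠ 0 := (Real.sqrt_pos.mpr hD).ne'
    rw [hAdef, hKdef, hsqpi, hGam, hmulrpow, hpipow]
    field_simp
  rw [← hfinal]
  exact hmain.congr' heq
end

section
/- Let (L_n)_{n≥1} be a decreasing chain of sublattices of a fixed lattice L_1 of rank r ≤ b+1 equipped with a positive definite integral quadratic form Q, and suppose there are constants C_ε > 0 such that the first successive minimum satisfies a_1(n) ≥ C_ε n^{1/(b+ε)} for all n and all ε ∈ (0,1), and moreover the products a_i(n) of the first i successive minima satisfy a_i(n) ≥ C_ε^i n^{i/(b+ε)}. Then the total count ∑_{n=1}^{∞} |{v ∈ L_n \ {0} : Q(v) < X}| = O_ε(X^{(b+1)/2}) as X → ∞. -/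
/-- The `i`-th successive minimum of a sublattice `L` of `ℤ^d` with respect to an integral
quadratic form `Q`: the infimum of `y > 0` such that `L` contains `i` linearly independent
vectors of `Q`-length at most `y²`. -/
noncomputable def sucMin (d : ℕ) (Q : QuadraticForm ℤ (Fin d → ℤ))
    (L : Submodule ℤ (Fin d → ℤ)) (i : ℕ) : ℝ :=
  sInf {y : ℝ | 0 < y ∧ ∃ vs : Fin i → (Fin d → ℤ),
    (∀ j, vs j ∈ L) ∧ LinearIndependent ℤ vs ∧ ∀ j, ((Q (vs j) : ℤ) : ℝ) ≤ y ^ 2}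

/-- `a_i(L) = μ₁(L) ⋯ μ_i(L)`, the product of the first `i` successive minima. -/
noncomputable def aMin (d : ℕ) (Q : QuadraticForm ℤ (Fin d → ℤ))
    (L : Submodule ℤ (Fin d → ℤ)) (i : ℕ) : ℝ :=
  ∏ j ∈ Finset.range i, sucMin d Q L (j + 1)

/-- If `L` contains a nonzero vector `v`, the first successive minimum is at most `√(Q v)`. -/
lemma sucMin_one_le {r : ℕ} (Q : QuadraticForm ℤ (Fin r → ℤ))
    (hpos : ∀ v : Fin r → ℤ, v ≠ 0 → 0 < Q v)
    (L : Submodule ℤ (Fin r → ℤ)) (v : Fin r → ℤ) (hvL : v ∈ L) (hv : v ≠ 0) :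
    sucMin r Q L 1 ≤ Real.sqrt ((Q v : ℤ) : ℝ) := by
  have hQ : (0:ℝ) < ((Q v : ℤ) : ℝ) := by exact_mod_cast hpos v hv
  apply csInf_le
  · exact ⟨0, fun y hy => le_of_lt hy.1⟩
  · exact ⟨Real.sqrt_pos.mpr hQ, fun _ => v, fun _ => hvL,
      LinearIndependent.of_subsingleton 0 hv,
      fun _ => le_of_eq (Real.sq_sqrt hQ.le).symm⟩

/-- Counting small vectors in a decreasing chain of lattices of rank `r ≤ b+1`: if the
successive-minima products satisfy `a_i(n) ≥ C_ε^i n^{i/(b+ε)}` for all `ε ∈ (0,1)`, and the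
geometry-of-numbers bound `|{v ∈ L_n ∖ 0 : Q(v) < X}| ≤ K ∑_{i=0}^{r} X^{i/2}/a_i(n)` holds,
then `∑_{n≥1} |{v ∈ L_n ∖ 0 : Q(v) < X}| = O(X^{(b+1)/2})`. -/
theorem stmt_8 (b r : ℕ) (hb : 3 ≤ b) (hr : r ≤ b + 1)
    (L : ℕ → Submodule ℤ (Fin r → ℤ)) (hdec : ∀ n, L (n + 1) ≤ L n)
    (Q : QuadraticForm ℤ (Fin r → ℤ)) (hpos : ∀ v : Fin r → ℤ, v ≠ 0 → 0 < Q v)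
    (Cε : ℝ → ℝ)
    (hmin : ∀ ε ∈ Set.Ioo (0 : ℝ) 1, 0 < Cε ε ∧ ∀ n : ℕ, 1 ≤ n → ∀ i ≤ r,
      (Cε ε) ^ i * (n : ℝ) ^ ((i : ℝ) / ((b : ℝ) + ε)) ≤ aMin r Q (L n) i)
    (K : ℝ)
    (hGoN : ∀ n : ℕ, 1 ≤ n → ∀ X : ℝ, 1 ≤ X →
      (Nat.card {v : Fin r → ℤ // v ∈ L n ∧ v ≠ 0 ∧ ((Q v : ℤ) : ℝ) < X} : ℝ) ≤
        K * ∑ i ∈ Finset.range (r + 1), X ^ ((i : ℝ) / 2) / aMin r Q (L n) i) :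
    ∃ C : ℝ, ∀ X : ℝ, 2 ≤ X →
      Summable (fun n : ℕ =>
        (Nat.card {v : Fin r → ℤ // v ∈ L (n + 1) ∧ v ≠ 0 ∧ ((Q v : ℤ) : ℝ) < X} : ℝ)) ∧
      ∑' n : ℕ,
        (Nat.card {v : Fin r → ℤ // v ∈ L (n + 1) ∧ v ≠ 0 ∧ ((Q v : ℤ) : ℝ) < X} : ℝ) ≤
        C * X ^ (((b : ℝ) + 1) / 2) := by
  rcases Nat.eq_zero_or_pos r with hr0 | hrpos
  · -- rank zero: there are no nonzero vectors at all
    subst hr0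
    refine ⟨0, fun X hX => ?_⟩
    have h0 : ∀ n : ℕ,
        (Nat.card {v : Fin 0 → ℤ // v ∈ L (n + 1) ∧ v ≠ 0 ∧ ((Q v : ℤ) : ℝ) < X} : ℝ) = 0 := by
      intro n
      have : IsEmpty {v : Fin 0 → ℤ // v ∈ L (n + 1) ∧ v ≠ 0 ∧ ((Q v : ℤ) : ℝ) < X} :=
        ⟨fun x => x.2.2.1 (funext fun i => i.elim0)⟩
      rw [Nat.card_of_isEmpty, Nat.cast_zero]
    simp only [h0]
    exact ⟨summable_zero, by rw [tsum_zero, zero_mul]⟩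
  · obtain ⟨hC0, hA⟩ := hmin (1/2) (by norm_num)
    set C0 : ℝ := Cε (1/2) with hC0def
    have hβpos : (0:ℝ) < (b:ℝ) + 1/2 := by positivity
    set β : ℝ := (b:ℝ) + 1/2 with hβdef
    set s : ℝ := ((b:ℝ) + 1)/β with hsdef
    have hs1 : 1 < s := by
      rw [hsdef, lt_div_iff₀ hβpos, one_mul, hβdef]; norm_num
    -- K is nonnegative
    have hK : 0 ≤ K := by
      have hS1 : (1:ℝ) ≤ ∑ i ∈ Finset.range (r + 1), (1:ℝ) ^ ((i:ℝ)/2) / aMin r Q (L 1) i := by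
        have hnn : ∀ i ∈ Finset.range (r + 1),
            (0:ℝ) ≤ (1:ℝ) ^ ((i:ℝ)/2) / aMin r Q (L 1) i := by
          intro i hi
          have hir : i ≤ r := Nat.lt_succ_iff.mp (Finset.mem_range.mp hi)
          have hlow := hA 1 le_rfl i hir
          have hlp : (0:ℝ) < C0 ^ i * ((1:ℕ):ℝ) ^ ((i:ℝ)/β) := by positivity
          have ha0 : (0:ℝ) < aMin r Q (L 1) i := lt_of_lt_of_le hlp hlow
          positivity
        have h00 : (1:ℝ) ^ (((0:ℕ):ℝ)/2) / aMin r Q (L 1) 0 = 1 := by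
          simp [aMin]
        calc (1:ℝ) = (1:ℝ) ^ (((0:ℕ):ℝ)/2) / aMin r Q (L 1) 0 := h00.symm
          _ ≤ ∑ i ∈ Finset.range (r + 1), (1:ℝ) ^ ((i:ℝ)/2) / aMin r Q (L 1) i :=
            Finset.single_le_sum hnn (Finset.mem_range.mpr (Nat.succ_pos r))
      have h1 := hGoN 1 le_rfl 1 le_rfl
      by_contra hKneg
      push_neg at hKneg
      have h3 : (0:ℝ) ≤ K * ∑ i ∈ Finset.range (r + 1),
          (1:ℝ) ^ ((i:ℝ)/2) / aMin r Q (L 1) i :=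
        le_trans (Nat.cast_nonneg _) h1
      nlinarith [hS1, h3]
    -- the comparison series
    have hg0 : Summable (fun n : ℕ => ((n:ℝ) + 1) ^ (-s)) := by
      have h1 : Summable (fun n : ℕ => (n:ℝ) ^ (-s)) :=
        Real.summable_nat_rpow.mpr (by linarith)
      have h2 := (summable_nat_add_iff 1).mpr h1
      refine h2.congr fun n => ?_
      push_cast
      ring_nf
    set Z : ℝ := ∑' n : ℕ, ((n:ℝ) + 1) ^ (-s) with hZdef
    refine ⟨K * (r + 1) * (C0⁻¹) ^ (b + 1) * Z, fun X hX => ?_⟩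
    have hX0 : (0:ℝ) < X := by linarith
    have hX1 : (1:ℝ) ≤ X := by linarith
    set u : ℝ := X ^ ((1:ℝ)/2) with hudef
    have hu0 : 0 < u := Real.rpow_pos_of_pos hX0 _
    set D : ℝ := K * (r + 1) * (C0⁻¹) ^ (b + 1) * X ^ (((b:ℝ) + 1)/2) with hDdef
    have hD0 : 0 ≤ D := by
      refine mul_nonneg (mul_nonneg (mul_nonneg hK ?_) ?_) ?_ <;> positivity
    -- key pointwise bound
    have key : ∀ n : ℕ,
        (Nat.card {v : Fin r → ℤ // v ∈ L (n + 1) ∧ v ≠ 0 ∧ ((Q v : ℤ) : ℝ) < X} : ℝ) ≤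
          D * ((n:ℝ) + 1) ^ (-s) := by
      intro n
      by_cases hc : Nat.card {v : Fin r → ℤ // v ∈ L (n + 1) ∧ v ≠ 0 ∧ ((Q v : ℤ) : ℝ) < X} = 0
      · rw [hc]
        push_cast
        have : (0:ℝ) ≤ ((n:ℝ) + 1) ^ (-s) := by positivity
        exact mul_nonneg hD0 this
      · obtain ⟨⟨v, hvL, hv0, hvX⟩⟩ := (Nat.card_ne_zero.mp hc).1
        have hN0 : (0:ℝ) < (n:ℝ) + 1 := by positivity
        set t : ℝ := ((n:ℝ) + 1) ^ ((1:ℝ)/β) with htdef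
        have ht0 : 0 < t := Real.rpow_pos_of_pos hN0 _
        -- the threshold inequality C0 * t ≤ u
        have hcastn : ((n + 1 : ℕ):ℝ) = (n:ℝ) + 1 := by push_cast; ring
        have hth : C0 * t ≤ u := by
          have h1 := hA (n + 1) (Nat.le_add_left 1 n) 1 hrpos
          rw [hcastn] at h1
          simp only [pow_one, Nat.cast_one] at h1
          have h2 : aMin r Q (L (n + 1)) 1 = sucMin r Q (L (n + 1)) 1 := by
            simp [aMin]
          have h3 := sucMin_one_le Q hpos (L (n + 1)) v hvL hv0
          have h4 : Real.sqrt ((Q v : ℤ):ℝ) ≤ Real.sqrt X := Real.sqrt_le_sqrt hvX.le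
          have h5 : Real.sqrt X = u := by rw [hudef, Real.sqrt_eq_rpow]
          calc C0 * t = C0 * ((n:ℝ) + 1) ^ ((1:ℝ)/β) := by rw [htdef]
            _ ≤ aMin r Q (L (n + 1)) 1 := h1
            _ = sucMin r Q (L (n + 1)) 1 := h2
            _ ≤ Real.sqrt ((Q v : ℤ):ℝ) := h3
            _ ≤ Real.sqrt X := h4
            _ = u := h5
        set q : ℝ := u / (C0 * t) with hqdef
        have hCt0 : 0 < C0 * t := by positivity
        have hq1 : 1 ≤ q := (one_le_div hCt0).mpr hth
        -- each term in the GoN sum is at most q ^ (b+1)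
        have hterm : ∀ i ∈ Finset.range (r + 1),
            X ^ ((i:ℝ)/2) / aMin r Q (L (n + 1)) i ≤ q ^ (b + 1) := by
          intro i hi
          have hir : i ≤ r := Nat.lt_succ_iff.mp (Finset.mem_range.mp hi)
          have hai := hA (n + 1) (Nat.le_add_left 1 n) i hir
          rw [hcastn] at hai
          have hNpow : ((n:ℝ) + 1) ^ ((i:ℝ)/β) = t ^ i := by
            rw [htdef, ← Real.rpow_natCast (((n:ℝ) + 1) ^ ((1:ℝ)/β)) i,
              ← Real.rpow_mul hN0.le]
            congr 1
            ring
          have hXpow : X ^ ((i:ℝ)/2) = u ^ i := by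
            rw [hudef, ← Real.rpow_natCast (X ^ ((1:ℝ)/2)) i, ← Real.rpow_mul hX0.le]
            congr 1
            ring
          rw [hNpow] at hai
          have hden : (0:ℝ) < C0 ^ i * t ^ i := by positivity
          calc X ^ ((i:ℝ)/2) / aMin r Q (L (n + 1)) i
              ≤ X ^ ((i:ℝ)/2) / (C0 ^ i * t ^ i) := by
                gcongr
            _ = q ^ i := by rw [hXpow, hqdef, div_pow, mul_pow]
            _ ≤ q ^ (b + 1) := pow_le_pow_right₀ hq1 (by omega)
        -- assemble
        have hsum := hGoN (n + 1) (Nat.le_add_left 1 n) X hX1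
        have hbd : (Nat.card {v : Fin r → ℤ // v ∈ L (n + 1) ∧ v ≠ 0 ∧
            ((Q v : ℤ) : ℝ) < X} : ℝ) ≤ K * ((r + 1) * q ^ (b + 1)) := by
          refine le_trans hsum ?_
          refine mul_le_mul_of_nonneg_left ?_ hK
          calc ∑ i ∈ Finset.range (r + 1), X ^ ((i:ℝ)/2) / aMin r Q (L (n + 1)) i
              ≤ ∑ _i ∈ Finset.range (r + 1), q ^ (b + 1) := Finset.sum_le_sum hterm
            _ = (r + 1) * q ^ (b + 1) := by
                rw [Finset.sum_const, Finset.card_range, nsmul_eq_mul]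
                push_cast
                ring
        -- identify q^(b+1)
        have hu : u ^ (b + 1) = X ^ (((b:ℝ) + 1)/2) := by
          rw [hudef, ← Real.rpow_natCast (X ^ ((1:ℝ)/2)) (b + 1), ← Real.rpow_mul hX0.le]
          congr 1
          push_cast
          ring
        have ht : ((n:ℝ) + 1) ^ (-s) = (t ^ (b + 1))⁻¹ := by
          rw [htdef, ← Real.rpow_natCast (((n:ℝ) + 1) ^ ((1:ℝ)/β)) (b + 1),
            ← Real.rpow_mul hN0.le, ← Real.rpow_neg hN0.le]
          congr 1
          rw [hsdef]
          push_cast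
          field_simp
        have hqq : q ^ (b + 1) = X ^ (((b:ℝ) + 1)/2) * (C0⁻¹) ^ (b + 1) * ((n:ℝ) + 1) ^ (-s) := by
          rw [hqdef, div_pow, mul_pow, hu, ht, div_eq_mul_inv, mul_inv, inv_pow]
          ring
        calc (Nat.card {v : Fin r → ℤ // v ∈ L (n + 1) ∧ v ≠ 0 ∧
            ((Q v : ℤ) : ℝ) < X} : ℝ) ≤ K * ((r + 1) * q ^ (b + 1)) := hbd
          _ = D * ((n:ℝ) + 1) ^ (-s) := by rw [hqq, hDdef]; ring
    have hgD : Summable (fun n : ℕ => D * ((n:ℝ) + 1) ^ (-s)) := hg0.mul_left D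
    have hsumf : Summable (fun n : ℕ =>
        (Nat.card {v : Fin r → ℤ // v ∈ L (n + 1) ∧ v ≠ 0 ∧ ((Q v : ℤ) : ℝ) < X} : ℝ)) :=
      Summable.of_nonneg_of_le (fun n => Nat.cast_nonneg _) key hgD
    refine ⟨hsumf, ?_⟩
    have hZ0 : 0 ≤ Z := tsum_nonneg fun n => by positivity
    calc ∑' n : ℕ, (Nat.card {v : Fin r → ℤ // v ∈ L (n + 1) ∧ v ≠ 0 ∧
          ((Q v : ℤ) : ℝ) < X} : ℝ)
        ≤ ∑' n : ℕ, D * ((n:ℝ) + 1) ^ (-s) := Summable.tsum_le_tsum key hsumf hgD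
      _ = D * Z := by rw [tsum_mul_left]
      _ = K * (r + 1) * (C0⁻¹) ^ (b + 1) * Z * X ^ (((b:ℝ) + 1)/2) := by
          rw [hDdef]; ring
end

section
/- Let (L_n)_{n≥1} be a decreasing chain of sublattices of a lattice L_1 of rank b+2 with positive definite form Q, such that the product of all b+2 successive minima satisfies a_{b+2}(n) ≥ c·p^{2n/e} for constants c > 0, e ≥ 1 and a prime p, and also a_i(n) ≥ C_ε^i n^{i/(b+ε)} for i ≤ b+1. Then ∑_{n ≥ ⌈(e/4) log_p X⌉} |{v ∈ L_n \ {0} : Q(v) < X}| = O_ε(X^{(b+1)/2}). -/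
lemma aMin_one_le (d : ℕ) (Q : QuadraticForm ℤ (Fin d → ℤ)) (L : Submodule ℤ (Fin d → ℤ))
    (v : Fin d → ℤ) (hv : v ∈ L) (h0 : v ≠ 0) (y : ℝ) (hy : 0 < y)
    (hQ : ((Q v : ℤ) : ℝ) ≤ y ^ 2) : aMin d Q L 1 ≤ y := by
  have : aMin d Q L 1 = sucMin d Q L 1 := by
    simp [aMin]
  rw [this]
  exact csInf_le ⟨0, fun z hz => hz.1.le⟩
    ⟨hy, fun _ => v, fun _ => hv, linearIndependent_unique_iff.mpr h0, fun _ => hQ⟩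

set_option maxHeartbeats 1000000 in
/-- Tail bound for small-vector counts at a supersingular prime: in a decreasing chain of
rank-`(b+2)` lattices with `a_{b+2}(n) ≥ c p^{2n/e}` and `a_i(n) ≥ C_ε^i n^{i/(b+ε)}` for
`i ≤ b+1`, and the geometry-of-numbers counting bound, the sum of
`|{v ∈ L_n ∖ 0 : Q(v) < X}|` over `n ≥ ⌈(e/4) log_p X⌉` is `O(X^{(b+1)/2})`. -/
theorem stmt_9 (b : ℕ) (hb : 3 ≤ b) (e : ℕ) (he : 1 ≤ e) (p : ℕ) (hp : p.Prime)
    (L : ℕ → Submodule ℤ (Fin (b + 2) → ℤ)) (hdec : ∀ n, L (n + 1) ≤ L n)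
    (Q : QuadraticForm ℤ (Fin (b + 2) → ℤ)) (hpos : ∀ v : Fin (b + 2) → ℤ, v ≠ 0 → 0 < Q v)
    (c : ℝ) (hc : 0 < c)
    (htop : ∀ n : ℕ, 1 ≤ n →
      c * (p : ℝ) ^ ((2 * (n : ℝ)) / (e : ℝ)) ≤ aMin (b + 2) Q (L n) (b + 2))
    (Cε : ℝ → ℝ)
    (hmin : ∀ ε ∈ Set.Ioo (0 : ℝ) 1, 0 < Cε ε ∧ ∀ n : ℕ, 1 ≤ n → ∀ i ≤ b + 1,
      (Cε ε) ^ i * (n : ℝ) ^ ((i : ℝ) / ((b : ℝ) + ε)) ≤ aMin (b + 2) Q (L n) i)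
    (K : ℝ)
    (hGoN : ∀ n : ℕ, 1 ≤ n → ∀ X : ℝ, 1 ≤ X →
      (Nat.card {v : Fin (b + 2) → ℤ // v ∈ L n ∧ v ≠ 0 ∧ ((Q v : ℤ) : ℝ) < X} : ℝ) ≤
        K * ∑ i ∈ Finset.range (b + 3), X ^ ((i : ℝ) / 2) / aMin (b + 2) Q (L n) i) :
    ∃ C : ℝ, ∀ X : ℝ, 2 ≤ X →
      Summable (fun n : ℕ =>
        (Nat.card {v : Fin (b + 2) → ℤ //
          v ∈ L (⌈(e : ℝ) / 4 * Real.logb p X⌉₊ + n) ∧ v ≠ 0 ∧ ((Q v : ℤ) : ℝ) < X} : ℝ)) ∧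
      ∑' n : ℕ,
        (Nat.card {v : Fin (b + 2) → ℤ //
          v ∈ L (⌈(e : ℝ) / 4 * Real.logb p X⌉₊ + n) ∧ v ≠ 0 ∧ ((Q v : ℤ) : ℝ) < X} : ℝ) ≤
        C * X ^ (((b : ℝ) + 1) / 2) := by
  obtain ⟨hC, hmin'⟩ := hmin (1/2) ⟨by norm_num, by norm_num⟩
  set C₀ : ℝ := Cε (1/2) with hC₀def
  set K' : ℝ := max K 0 with hK'def
  have hK'0 : 0 ≤ K' := le_max_right _ _
  have hKK' : K ≤ K' := le_max_left _ _
  set β : ℝ := (b : ℝ) + 1/2 with hβdef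
  have hβ0 : 0 < β := by positivity
  set σ : ℝ := ((b : ℝ) + 1) / β with hσdef
  have hσ1 : 1 < σ := by
    rw [hσdef, lt_div_iff₀ hβ0]
    simp [hβdef]; norm_num
  have hσ0 : 0 ≤ σ := by linarith
  have hp1 : (1 : ℝ) < (p : ℝ) := by exact_mod_cast hp.one_lt
  have hp0 : (0 : ℝ) < (p : ℝ) := by linarith
  have he0 : (0 : ℝ) < (e : ℝ) := by exact_mod_cast he
  set ρ : ℝ := (p : ℝ) ^ ((2 : ℝ) / (e : ℝ)) with hρdef
  have hρ1 : 1 < ρ := Real.one_lt_rpow_iff_of_pos hp0 |>.mpr (Or.inl ⟨hp1, by positivity⟩)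
  set r : ℝ := ρ⁻¹ with hrdef
  have hr0 : 0 < r := by rw [hrdef]; positivity
  have hr1 : r < 1 := by rw [hrdef, inv_lt_one_iff₀]; right; exact hρ1
  have hZsum : Summable (fun m : ℕ => (((m : ℝ) + 1) ^ σ)⁻¹) := by
    have h1 : Summable (fun n : ℕ => ((n : ℝ) ^ σ)⁻¹) :=
      Real.summable_nat_rpow_inv.mpr hσ1
    have h2 := (summable_nat_add_iff 1).mpr h1
    refine h2.congr fun m => ?_
    push_cast
    ring_nf
  set Z : ℝ := ∑' m : ℕ, (((m : ℝ) + 1) ^ σ)⁻¹ with hZdef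
  have hZ0 : 0 ≤ Z := tsum_nonneg fun m => by positivity
  refine ⟨K' * (((b : ℝ) + 2) * Z / C₀ ^ (b + 1) + (1 - r)⁻¹ / c), ?_⟩
  intro X hX
  have hX0 : (0 : ℝ) < X := by linarith
  have hX1 : (1 : ℝ) ≤ X := by linarith
  set N : ℕ := ⌈(e : ℝ) / 4 * Real.logb p X⌉₊ with hNdef
  have hlogb : 0 < Real.logb p X := Real.logb_pos hp1 (by linarith)
  have hN1 : 1 ≤ N := Nat.ceil_pos.mpr (by positivity)
  set u : ℝ := X ^ ((1:ℝ)/2) with hudef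
  have hu0 : 0 < u := Real.rpow_pos_of_pos hX0 _
  have hub : X ^ (((b:ℝ) + 1)/2) = u ^ (b + 1) := by
    rw [hudef, ← Real.rpow_natCast (X ^ ((1:ℝ)/2)) (b+1), ← Real.rpow_mul hX0.le]
    push_cast
    ring_nf
  have husq : u ^ 2 = X := by
    rw [hudef, ← Real.rpow_natCast (X ^ ((1:ℝ)/2)) 2, ← Real.rpow_mul hX0.le]
    norm_num
  -- the comparison function
  set A : ℝ := K' * (((b:ℝ) + 2) * (u ^ (b+1) / C₀ ^ (b+1))) with hAdef
  set B : ℝ := K' * (u ^ (b+1) / c) with hBdef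
  have hA0 : 0 ≤ A := by rw [hAdef]; positivity
  have hB0 : 0 ≤ B := by rw [hBdef]; positivity
  set g : ℕ → ℝ := fun m => A * (((m : ℝ) + 1) ^ σ)⁻¹ + B * r ^ m with hgdef
  -- key pointwise estimate
  have key : ∀ m : ℕ,
      (Nat.card {v : Fin (b + 2) → ℤ //
        v ∈ L (N + m) ∧ v ≠ 0 ∧ ((Q v : ℤ) : ℝ) < X} : ℝ) ≤ g m := by
    intro m
    have h1n : 1 ≤ N + m := le_trans hN1 (Nat.le_add_right _ _)
    by_cases hv : ∃ v : Fin (b+2) → ℤ, v ∈ L (N + m) ∧ v ≠ 0 ∧ ((Q v : ℤ) : ℝ) < X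
    · obtain ⟨v, hvL, hv0, hvQ⟩ := hv
      -- first minimum is at most u
      have hfirst : aMin (b+2) Q (L (N+m)) 1 ≤ u :=
        aMin_one_le _ _ _ v hvL hv0 u hu0 (by rw [husq]; exact hvQ.le)
      set n : ℕ := N + m with hndef
      have hn0 : (0:ℝ) < (n:ℝ) := by exact_mod_cast h1n
      set w : ℝ := (n : ℝ) ^ ((1:ℝ)/β) with hwdef
      have hw0 : 0 < w := Real.rpow_pos_of_pos hn0 _
      have hwpow : ∀ i : ℕ, w ^ i = (n : ℝ) ^ ((i:ℝ)/β) := by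
        intro i
        rw [hwdef, ← Real.rpow_natCast ((n:ℝ) ^ ((1:ℝ)/β)) i, ← Real.rpow_mul hn0.le]
        ring_nf
      have hCw : C₀ * w ≤ u := by
        have := hmin' n h1n 1 (by omega)
        rw [← hwpow 1] at this
        simpa using le_trans (by simpa using this) hfirst
      have hCw0 : 0 < C₀ * w := by positivity
      have hq1 : 1 ≤ u / (C₀ * w) := (one_le_div hCw0).mpr hCw
      -- bound on terms i ≤ b+1
      have hterm : ∀ i : ℕ, i ≤ b + 1 →
          X ^ ((i:ℝ)/2) / aMin (b+2) Q (L n) i ≤ u ^ (b+1) / (C₀ ^ (b+1) * w ^ (b+1)) := by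
        intro i hi
        have hai : C₀ ^ i * w ^ i ≤ aMin (b+2) Q (L n) i := by
          rw [hwpow i]; exact hmin' n h1n i hi
        have hai0 : 0 < aMin (b+2) Q (L n) i := lt_of_lt_of_le (by positivity) hai
        have hXu : X ^ ((i:ℝ)/2) = u ^ i := by
          rw [hudef, ← Real.rpow_natCast (X ^ ((1:ℝ)/2)) i, ← Real.rpow_mul hX0.le]
          ring_nf
        rw [hXu]
        calc u ^ i / aMin (b+2) Q (L n) i ≤ u ^ i / (C₀ ^ i * w ^ i) := by
              apply div_le_div_of_nonneg_left (by positivity) (by positivity) hai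
          _ = (u / (C₀ * w)) ^ i := by rw [div_pow, mul_pow]
          _ ≤ (u / (C₀ * w)) ^ (b+1) := pow_le_pow_right₀ hq1 hi
          _ = u ^ (b+1) / (C₀ ^ (b+1) * w ^ (b+1)) := by rw [div_pow, mul_pow]
      -- top term
      have hPN : u * ρ ^ m ≤ (p:ℝ) ^ ((2 * (n:ℝ)) / (e:ℝ)) := by
        have hsplit : (2 * (n:ℝ)) / (e:ℝ) = (2 * (N:ℝ)) / (e:ℝ) + (2 * (m:ℝ)) / (e:ℝ) := by
          rw [hndef]; push_cast; ring
        rw [hsplit, Real.rpow_add hp0]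
        have h1 : u ≤ (p:ℝ) ^ ((2 * (N:ℝ)) / (e:ℝ)) := by
          have hceil : (e : ℝ) / 4 * Real.logb p X ≤ (N : ℝ) := Nat.le_ceil _
          have hexp : Real.logb p X * (1/2) ≤ (2 * (N:ℝ)) / (e:ℝ) := by
            rw [le_div_iff₀ he0]
            have h2 := mul_le_mul_of_nonneg_left hceil (by norm_num : (0:ℝ) ≤ 2)
            linarith
          calc u = (p:ℝ) ^ (Real.logb p X * (1/2)) := by
                rw [Real.rpow_mul hp0.le, Real.rpow_logb hp0 (by linarith) hX0, hudef]
            _ ≤ _ := Real.rpow_le_rpow_of_exponent_le hp1.le hexp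
        have h2 : ρ ^ m = (p:ℝ) ^ ((2 * (m:ℝ)) / (e:ℝ)) := by
          rw [hρdef, ← Real.rpow_natCast ((p:ℝ) ^ ((2:ℝ)/(e:ℝ))) m, ← Real.rpow_mul hp0.le]
          ring_nf
        rw [← h2]
        exact mul_le_mul h1 le_rfl (by positivity) (by positivity)
      have htopterm : X ^ (((b+2:ℕ):ℝ)/2) / aMin (b+2) Q (L n) (b+2) ≤ u ^ (b+1) / c * r ^ m := by
        have hXu : X ^ (((b+2:ℕ):ℝ)/2) = u ^ (b+2) := by
          rw [hudef, ← Real.rpow_natCast (X ^ ((1:ℝ)/2)) (b+2), ← Real.rpow_mul hX0.le]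
          ring_nf
        have ha : c * (u * ρ ^ m) ≤ aMin (b+2) Q (L n) (b+2) :=
          le_trans (by
            apply mul_le_mul_of_nonneg_left hPN hc.le) (htop n h1n)
        have ha0 : (0:ℝ) < c * (u * ρ ^ m) := by positivity
        rw [hXu]
        calc u ^ (b+2) / aMin (b+2) Q (L n) (b+2) ≤ u ^ (b+2) / (c * (u * ρ ^ m)) := by
              apply div_le_div_of_nonneg_left (by positivity) ha0 ha
          _ = u ^ (b+1) / c * r ^ m := by
              rw [hrdef, pow_succ]
              have hρ0 : ρ ≠ 0 := (lt_trans zero_lt_one hρ1).ne'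
              field_simp
              ring_nf
              rw [← mul_pow, mul_inv_cancel₀ hρ0, one_pow]
      -- combine via hGoN
      have hsum := hGoN n h1n X hX1
      have hS : ∑ i ∈ Finset.range (b+3), X ^ ((i:ℝ)/2) / aMin (b+2) Q (L n) i ≤
          ((b:ℝ)+2) * (u ^ (b+1) / (C₀ ^ (b+1) * w ^ (b+1))) + u ^ (b+1) / c * r ^ m := by
        rw [Finset.sum_range_succ]
        have h1 : ∑ i ∈ Finset.range (b+2), X ^ ((i:ℝ)/2) / aMin (b+2) Q (L n) i ≤
            ((b:ℝ)+2) * (u ^ (b+1) / (C₀ ^ (b+1) * w ^ (b+1))) := by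
          calc ∑ i ∈ Finset.range (b+2), X ^ ((i:ℝ)/2) / aMin (b+2) Q (L n) i
              ≤ ∑ _i ∈ Finset.range (b+2), u ^ (b+1) / (C₀ ^ (b+1) * w ^ (b+1)) :=
                Finset.sum_le_sum fun i hi => hterm i (by
                  have := Finset.mem_range.mp hi; omega)
            _ = ((b:ℝ)+2) * (u ^ (b+1) / (C₀ ^ (b+1) * w ^ (b+1))) := by
                rw [Finset.sum_const, Finset.card_range, nsmul_eq_mul]; push_cast; ring
        exact add_le_add h1 htopterm
      -- w ^ (b+1) ≥ (m+1)^σ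
      have hwσ : ((m:ℝ)+1) ^ σ ≤ w ^ (b+1) := by
        rw [hwpow (b+1)]
        have : ((b+1:ℕ):ℝ)/β = σ := by push_cast [hσdef]; ring_nf
        rw [this]
        apply Real.rpow_le_rpow (by positivity) _ hσ0
        rw [hndef]; push_cast
        have : (1:ℝ) ≤ (N:ℝ) := by exact_mod_cast hN1
        linarith
      have hfinal : ((b:ℝ)+2) * (u ^ (b+1) / (C₀ ^ (b+1) * w ^ (b+1))) + u ^ (b+1) / c * r ^ m ≤
          (((b:ℝ)+2) * (u ^ (b+1) / C₀ ^ (b+1))) * (((m:ℝ)+1) ^ σ)⁻¹ + (u ^ (b+1) / c) * r ^ m := by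
        have hmσ0 : (0:ℝ) < ((m:ℝ)+1) ^ σ := by positivity
        have h : u ^ (b+1) / (C₀ ^ (b+1) * w ^ (b+1)) ≤
            (u ^ (b+1) / C₀ ^ (b+1)) * (((m:ℝ)+1) ^ σ)⁻¹ := by
          rw [div_mul_eq_div_div, div_eq_mul_inv (u ^ (b+1) / C₀ ^ (b+1))]
          apply mul_le_mul_of_nonneg_left _ (by positivity)
          exact inv_anti₀ hmσ0 hwσ
        calc _ ≤ ((b:ℝ)+2) * ((u ^ (b+1) / C₀ ^ (b+1)) * (((m:ℝ)+1) ^ σ)⁻¹) + u ^ (b+1) / c * r ^ m := by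
              apply add_le_add _ le_rfl
              exact mul_le_mul_of_nonneg_left h (by positivity)
          _ = _ := by ring
      have hS0 : 0 ≤ ((b:ℝ)+2) * (u ^ (b+1) / (C₀ ^ (b+1) * w ^ (b+1))) + u ^ (b+1) / c * r ^ m := by
        positivity
      calc (Nat.card {v : Fin (b + 2) → ℤ //
            v ∈ L (N + m) ∧ v ≠ 0 ∧ ((Q v : ℤ) : ℝ) < X} : ℝ)
          ≤ K * ∑ i ∈ Finset.range (b+3), X ^ ((i:ℝ)/2) / aMin (b+2) Q (L n) i := hsum
        _ ≤ K' * ∑ i ∈ Finset.range (b+3), X ^ ((i:ℝ)/2) / aMin (b+2) Q (L n) i := by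
            apply mul_le_mul_of_nonneg_right hKK'
            apply Finset.sum_nonneg
            intro i hi
            have hi' := Finset.mem_range.mp hi
            rcases Nat.lt_or_ge i (b+2) with hcase|hcase
            · have hai : 0 < aMin (b+2) Q (L n) i :=
                lt_of_lt_of_le (by positivity) (hmin' n h1n i (by omega))
              exact div_nonneg (Real.rpow_nonneg hX0.le _) hai.le
            · have hieq : i = b+2 := by omega
              subst hieq
              have hai : 0 < aMin (b+2) Q (L n) (b+2) :=
                lt_of_lt_of_le (by positivity) (htop n h1n)
              exact div_nonneg (Real.rpow_nonneg hX0.le _) hai.le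
        _ ≤ K' * (((b:ℝ)+2) * (u ^ (b+1) / (C₀ ^ (b+1) * w ^ (b+1))) + u ^ (b+1) / c * r ^ m) :=
            mul_le_mul_of_nonneg_left hS hK'0
        _ ≤ K' * ((((b:ℝ)+2) * (u ^ (b+1) / C₀ ^ (b+1))) * (((m:ℝ)+1) ^ σ)⁻¹ + (u ^ (b+1) / c) * r ^ m) :=
            mul_le_mul_of_nonneg_left hfinal hK'0
        _ = g m := by rw [hgdef, hAdef, hBdef]; ring
    · have : IsEmpty {v : Fin (b + 2) → ℤ //
          v ∈ L (N + m) ∧ v ≠ 0 ∧ ((Q v : ℤ) : ℝ) < X} := ⟨fun ⟨x, hx⟩ => hv ⟨x, hx⟩⟩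
      rw [Nat.card_of_isEmpty]
      rw [hgdef]
      have : (0:ℝ) ≤ A * (((m : ℝ) + 1) ^ σ)⁻¹ + B * r ^ m := by positivity
      simpa using this
  -- summability of g
  have hgsum : Summable g := by
    apply Summable.add
    · exact hZsum.mul_left A
    · exact (summable_geometric_of_lt_one hr0.le hr1).mul_left B
  have hfsum : Summable (fun m : ℕ =>
      (Nat.card {v : Fin (b + 2) → ℤ //
        v ∈ L (N + m) ∧ v ≠ 0 ∧ ((Q v : ℤ) : ℝ) < X} : ℝ)) :=
    Summable.of_nonneg_of_le (fun m => Nat.cast_nonneg _) key hgsum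
  refine ⟨hfsum, ?_⟩
  have htsum : ∑' m : ℕ, (Nat.card {v : Fin (b + 2) → ℤ //
      v ∈ L (N + m) ∧ v ≠ 0 ∧ ((Q v : ℤ) : ℝ) < X} : ℝ) ≤ ∑' m, g m :=
    Summable.tsum_le_tsum key hfsum hgsum
  have hgval : ∑' m, g m = A * Z + B * (1 - r)⁻¹ := by
    rw [hgdef]
    rw [Summable.tsum_add (hZsum.mul_left A) ((summable_geometric_of_lt_one hr0.le hr1).mul_left B),
      tsum_mul_left, tsum_mul_left, tsum_geometric_of_lt_one hr0.le hr1, hZdef]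
  refine le_trans htsum ?_
  rw [hgval, hub, hAdef, hBdef]
  apply le_of_eq
  ring
end

section
/- Let L ⊂ R^{b+2} be a lattice and Q a quadratic form of signature (b,2) with fixed negative definite plane P; for λ ∈ L write λ_x for the projection to P. Suppose for each m ≥ 1 the count |{λ ∈ L : Q(λ) = m, |Q(λ_x)| ≤ m}| ≤ C m^{b/2}, and for each real T > 1 the count |{λ ∈ L : Q(λ) = m, |Q(λ_x)| < m/T}| ≤ C(m^{b/2}/T + C_T m^{(b+2)/4}). Then A_mt(m) := 2 ∑_{λ ∈ L, Q(λ)=m, 1 ≤ |Q(λ_x)| ≤ m} log(m/|Q(λ_x)|) satisfies A_mt(m) = o(m^{b/2} log m) as m → ∞. -/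
open Filter Topology

/-- The main term `A_mt(m) = 2 ∑_{λ ∈ L, Q(λ)=m, 1 ≤ |Q(λ_x)| ≤ m} log(m/|Q(λ_x)|)` is
`o(m^{b/2} log m)`.  Here `Q(v) = -∑ (v.1 i)² + ∑ (v.2 i)²` has signature `(b,2)` and
`|Q(v_x)| = ∑ (v.1 i)²` is (minus) the value on the negative plane.  The hypotheses are the
circle-method counting estimates: `|{λ ∈ L : Q(λ) = m, |Q(λ_x)| ≤ m}| ≤ C m^{b/2}` and, for
each `T > 1`, `|{λ ∈ L : Q(λ) = m, |Q(λ_x)| < m/T}| ≤ C m^{b/2}/T + C_T m^{(b+2)/4}`. -/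
theorem stmt_10 (b : ℕ) (hb : 3 ≤ b) (L : Set ((Fin 2 → ℝ) × (Fin b → ℝ)))
    (hfin : ∀ m : ℕ, 1 ≤ m →
      {v : (Fin 2 → ℝ) × (Fin b → ℝ) | v ∈ L ∧
        (-(∑ i, (v.1 i) ^ 2) + ∑ i, (v.2 i) ^ 2) = (m : ℝ) ∧
        (∑ i, (v.1 i) ^ 2) ≤ (m : ℝ)}.Finite)
    (C : ℝ) (hC : 0 < C)
    (h1 : ∀ m : ℕ, 1 ≤ m →
      (Nat.card {v : (Fin 2 → ℝ) × (Fin b → ℝ) // v ∈ L ∧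
        (-(∑ i, (v.1 i) ^ 2) + ∑ i, (v.2 i) ^ 2) = (m : ℝ) ∧
        (∑ i, (v.1 i) ^ 2) ≤ (m : ℝ)} : ℝ) ≤ C * (m : ℝ) ^ ((b : ℝ) / 2))
    (h2 : ∀ T : ℝ, 1 < T → ∃ CT : ℝ, ∀ m : ℕ, 1 ≤ m →
      (Nat.card {v : (Fin 2 → ℝ) × (Fin b → ℝ) // v ∈ L ∧
        (-(∑ i, (v.1 i) ^ 2) + ∑ i, (v.2 i) ^ 2) = (m : ℝ) ∧
        (∑ i, (v.1 i) ^ 2) < (m : ℝ) / T} : ℝ) ≤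
        C * (m : ℝ) ^ ((b : ℝ) / 2) / T + CT * (m : ℝ) ^ (((b : ℝ) + 2) / 4)) :
    Tendsto (fun m : ℕ =>
      (2 * ∑ᶠ v ∈ {v : (Fin 2 → ℝ) × (Fin b → ℝ) | v ∈ L ∧
          (-(∑ i, (v.1 i) ^ 2) + ∑ i, (v.2 i) ^ 2) = (m : ℝ) ∧
          1 ≤ (∑ i, (v.1 i) ^ 2) ∧ (∑ i, (v.1 i) ^ 2) ≤ (m : ℝ)},
        Real.log ((m : ℝ) / (∑ i, (v.1 i) ^ 2))) /
        ((m : ℝ) ^ ((b : ℝ) / 2) * Real.log m))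
      atTop (nhds 0) := by
  classical
  rw [NormedAddCommGroup.tendsto_nhds_zero]
  intro ε hε
  set T : ℝ := max 2 (8 * C / ε) with hTdef
  have hT1 : (1:ℝ) < T := lt_of_lt_of_le one_lt_two (le_max_left _ _)
  have hT0 : (0:ℝ) < T := by linarith
  obtain ⟨CT, hCT⟩ := h2 T hT1
  have hterm2 : 2 * C / T ≤ ε / 4 := by
    rw [div_le_iff₀ hT0]
    have h8 : 8 * C / ε ≤ T := le_max_right _ _
    have he : ε / 4 * (8 * C / ε) = 2 * C := by field_simp; ring
    nlinarith [mul_le_mul_of_nonneg_left h8 (by positivity : (0:ℝ) ≤ ε / 4)]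
  have hbR : (3:ℝ) ≤ (b:ℝ) := by exact_mod_cast hb
  have ev1 : ∀ᶠ m : ℕ in atTop, 2 * C * Real.log T / Real.log m < ε / 4 := by
    have h : Tendsto (fun m : ℕ => 2 * C * Real.log T / Real.log m) atTop (𝓝 0) :=
      Tendsto.div_atTop tendsto_const_nhds
        (Real.tendsto_log_atTop.comp tendsto_natCast_atTop_atTop)
    exact h.eventually_lt_const (by positivity)
  have ev2 : ∀ᶠ m : ℕ in atTop,
      2 * CT * (m:ℝ) ^ (((b:ℝ) + 2) / 4 - (b:ℝ) / 2) < ε / 4 := by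
    have hy : (0:ℝ) < (b:ℝ) / 2 - ((b:ℝ) + 2) / 4 := by linarith
    have h0 : Tendsto (fun m : ℕ => (m:ℝ) ^ (((b:ℝ) + 2) / 4 - (b:ℝ) / 2)) atTop (𝓝 0) := by
      have := (tendsto_rpow_neg_atTop hy).comp tendsto_natCast_atTop_atTop
      refine this.congr fun m => ?_
      simp only [Function.comp_apply, neg_sub]
    have h : Tendsto (fun m : ℕ => 2 * CT * (m:ℝ) ^ (((b:ℝ) + 2) / 4 - (b:ℝ) / 2))
        atTop (𝓝 (2 * CT * 0)) := h0.const_mul _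
    rw [mul_zero] at h
    exact h.eventually_lt_const (by positivity)
  filter_upwards [ev1, ev2, eventually_ge_atTop 2] with m hev1 hev2 hm2
  have hm1 : 1 ≤ m := by omega
  have hmR : (2:ℝ) ≤ (m:ℝ) := by exact_mod_cast hm2
  have hm0 : (0:ℝ) < (m:ℝ) := by linarith
  have hlog : 0 < Real.log m := Real.log_pos (by linarith)
  have hpB : (0:ℝ) < (m:ℝ) ^ ((b:ℝ) / 2) := Real.rpow_pos_of_pos hm0 _
  have hS : {v : (Fin 2 → ℝ) × (Fin b → ℝ) | v ∈ L ∧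
      (-(∑ i, (v.1 i) ^ 2) + ∑ i, (v.2 i) ^ 2) = (m : ℝ) ∧
      1 ≤ (∑ i, (v.1 i) ^ 2) ∧ (∑ i, (v.1 i) ^ 2) ≤ (m : ℝ)}.Finite :=
    (hfin m hm1).subset (fun v hv => ⟨hv.1, hv.2.1, hv.2.2.2⟩)
  have hsum_eq : (∑ᶠ (v : (Fin 2 → ℝ) × (Fin b → ℝ)) (_ : v ∈ L ∧
          (-(∑ i, (v.1 i) ^ 2) + ∑ i, (v.2 i) ^ 2) = (m : ℝ) ∧
          1 ≤ (∑ i, (v.1 i) ^ 2) ∧ (∑ i, (v.1 i) ^ 2) ≤ (m : ℝ)),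
        Real.log ((m : ℝ) / (∑ i, (v.1 i) ^ 2))) =
      ∑ v ∈ hS.toFinset, Real.log ((m : ℝ) / (∑ i, (v.1 i) ^ 2)) := by
    have e2 := finsum_mem_coe_finset (s := hS.toFinset)
      (f := fun v : (Fin 2 → ℝ) × (Fin b → ℝ) => Real.log ((m : ℝ) / (∑ i, (v.1 i) ^ 2)))
    rw [hS.coe_toFinset] at e2
    exact e2
  rw [hsum_eq]
  -- basic facts about members of  the finset
  have hmem : ∀ v ∈ hS.toFinset, v ∈ L ∧
      (-(∑ i, (v.1 i) ^ 2) + ∑ i, (v.2 i) ^ 2) = (m : ℝ) ∧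
      1 ≤ (∑ i, (v.1 i) ^ 2) ∧ (∑ i, (v.1 i) ^ 2) ≤ (m : ℝ) := by
    intro v hv
    exact hS.mem_toFinset.mp hv
  have hsum_nonneg : 0 ≤ ∑ v ∈ hS.toFinset, Real.log ((m : ℝ) / (∑ i, (v.1 i) ^ 2)) := by
    refine Finset.sum_nonneg fun v hv => ?_
    obtain ⟨-, -, hx1, hxm⟩ := hmem v hv
    exact Real.log_nonneg ((one_le_div (by linarith)).mpr hxm)
  -- split the sum
  have hsplit := Finset.sum_filter_add_sum_filter_not hS.toFinset
    (fun v => (m:ℝ) / T ≤ ∑ i, (v.1 i) ^ 2)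
    (fun v => Real.log ((m : ℝ) / (∑ i, (v.1 i) ^ 2)))
  -- bound on the big part
  have hbig : ∑ v ∈ hS.toFinset.filter (fun v => (m:ℝ) / T ≤ ∑ i, (v.1 i) ^ 2),
      Real.log ((m : ℝ) / (∑ i, (v.1 i) ^ 2)) ≤ C * (m:ℝ) ^ ((b:ℝ) / 2) * Real.log T := by
    have hlogT : 0 ≤ Real.log T := Real.log_nonneg (by linarith)
    have step1 : ∑ v ∈ hS.toFinset.filter (fun v => (m:ℝ) / T ≤ ∑ i, (v.1 i) ^ 2),
        Real.log ((m : ℝ) / (∑ i, (v.1 i) ^ 2)) ≤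
        ∑ _v ∈ hS.toFinset.filter (fun v => (m:ℝ) / T ≤ ∑ i, (v.1 i) ^ 2), Real.log T := by
      refine Finset.sum_le_sum fun v hv => ?_
      obtain ⟨hvF, hvT⟩ := Finset.mem_filter.mp hv
      obtain ⟨-, -, hx1, hxm⟩ := hmem v hvF
      have hx0 : (0:ℝ) < ∑ i, (v.1 i) ^ 2 := by linarith
      have hdiv : (m:ℝ) / (∑ i, (v.1 i) ^ 2) ≤ T := by
        rw [div_le_iff₀ hx0]
        have := (div_le_iff₀ hT0).mp hvT
        linarith
      exact Real.log_le_log (by positivity) hdiv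
    have step2 : ((hS.toFinset.filter (fun v => (m:ℝ) / T ≤ ∑ i, (v.1 i) ^ 2)).card : ℝ) ≤
        C * (m:ℝ) ^ ((b:ℝ) / 2) := by
      have hcard1 : (hS.toFinset.filter (fun v => (m:ℝ) / T ≤ ∑ i, (v.1 i) ^ 2)).card ≤
          hS.toFinset.card := Finset.card_filter_le _ _
      have hcard2 : hS.toFinset.card = Nat.card {v : (Fin 2 → ℝ) × (Fin b → ℝ) | v ∈ L ∧
          (-(∑ i, (v.1 i) ^ 2) + ∑ i, (v.2 i) ^ 2) = (m : ℝ) ∧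
          1 ≤ (∑ i, (v.1 i) ^ 2) ∧ (∑ i, (v.1 i) ^ 2) ≤ (m : ℝ)} := by
        rw [Nat.card_coe_set_eq, Set.ncard_eq_toFinset_card _ hS]
      have hcard3 : Nat.card {v : (Fin 2 → ℝ) × (Fin b → ℝ) | v ∈ L ∧
          (-(∑ i, (v.1 i) ^ 2) + ∑ i, (v.2 i) ^ 2) = (m : ℝ) ∧
          1 ≤ (∑ i, (v.1 i) ^ 2) ∧ (∑ i, (v.1 i) ^ 2) ≤ (m : ℝ)} ≤
          Nat.card {v : (Fin 2 → ℝ) × (Fin b → ℝ) // v ∈ L ∧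
          (-(∑ i, (v.1 i) ^ 2) + ∑ i, (v.2 i) ^ 2) = (m : ℝ) ∧
          (∑ i, (v.1 i) ^ 2) ≤ (m : ℝ)} :=
        Nat.card_mono (hfin m hm1).to_subtype (fun v hv => ⟨hv.1, hv.2.1, hv.2.2.2⟩)
      calc ((hS.toFinset.filter (fun v => (m:ℝ) / T ≤ ∑ i, (v.1 i) ^ 2)).card : ℝ)
          ≤ ((Nat.card {v : (Fin 2 → ℝ) × (Fin b → ℝ) // v ∈ L ∧
          (-(∑ i, (v.1 i) ^ 2) + ∑ i, (v.2 i) ^ 2) = (m : ℝ) ∧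
          (∑ i, (v.1 i) ^ 2) ≤ (m : ℝ)} : ℕ) : ℝ) := by
            exact_mod_cast le_trans hcard1 (hcard2 ▸ hcard3)
        _ ≤ C * (m:ℝ) ^ ((b:ℝ) / 2) := h1 m hm1
    calc ∑ v ∈ hS.toFinset.filter (fun v => (m:ℝ) / T ≤ ∑ i, (v.1 i) ^ 2),
        Real.log ((m : ℝ) / (∑ i, (v.1 i) ^ 2))
        ≤ ∑ _v ∈ hS.toFinset.filter (fun v => (m:ℝ) / T ≤ ∑ i, (v.1 i) ^ 2), Real.log T :=
          step1
      _ = ((hS.toFinset.filter (fun v => (m:ℝ) / T ≤ ∑ i, (v.1 i) ^ 2)).card : ℝ) *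
          Real.log T := by rw [Finset.sum_const, nsmul_eq_mul]
      _ ≤ C * (m:ℝ) ^ ((b:ℝ) / 2) * Real.log T := by
          exact mul_le_mul_of_nonneg_right step2 hlogT
  -- bound on the small part
  have hsmall : ∑ v ∈ hS.toFinset.filter (fun v => ¬ ((m:ℝ) / T ≤ ∑ i, (v.1 i) ^ 2)),
      Real.log ((m : ℝ) / (∑ i, (v.1 i) ^ 2)) ≤
      (C * (m:ℝ) ^ ((b:ℝ) / 2) / T + CT * (m:ℝ) ^ (((b:ℝ) + 2) / 4)) * Real.log m := by
    have step1 : ∑ v ∈ hS.toFinset.filter (fun v => ¬ ((m:ℝ) / T ≤ ∑ i, (v.1 i) ^ 2)),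
        Real.log ((m : ℝ) / (∑ i, (v.1 i) ^ 2)) ≤
        ∑ _v ∈ hS.toFinset.filter (fun v => ¬ ((m:ℝ) / T ≤ ∑ i, (v.1 i) ^ 2)),
          Real.log m := by
      refine Finset.sum_le_sum fun v hv => ?_
      obtain ⟨hvF, -⟩ := Finset.mem_filter.mp hv
      obtain ⟨-, -, hx1, hxm⟩ := hmem v hvF
      exact Real.log_le_log (by positivity) (div_le_self hm0.le hx1)
    have hfin2 : {v : (Fin 2 → ℝ) × (Fin b → ℝ) | v ∈ L ∧
        (-(∑ i, (v.1 i) ^ 2) + ∑ i, (v.2 i) ^ 2) = (m : ℝ) ∧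
        (∑ i, (v.1 i) ^ 2) < (m : ℝ) / T}.Finite :=
      (hfin m hm1).subset (fun v hv =>
        ⟨hv.1, hv.2.1, le_trans hv.2.2.le (div_le_self hm0.le hT1.le)⟩)
    have step2 : ((hS.toFinset.filter
        (fun v => ¬ ((m:ℝ) / T ≤ ∑ i, (v.1 i) ^ 2))).card : ℝ) ≤
        C * (m:ℝ) ^ ((b:ℝ) / 2) / T + CT * (m:ℝ) ^ (((b:ℝ) + 2) / 4) := by
      have hsub : ↑(hS.toFinset.filter (fun v => ¬ ((m:ℝ) / T ≤ ∑ i, (v.1 i) ^ 2))) ⊆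
          {v : (Fin 2 → ℝ) × (Fin b → ℝ) | v ∈ L ∧
          (-(∑ i, (v.1 i) ^ 2) + ∑ i, (v.2 i) ^ 2) = (m : ℝ) ∧
          (∑ i, (v.1 i) ^ 2) < (m : ℝ) / T} := by
        intro v hv
        obtain ⟨hvF, hvT⟩ := Finset.mem_filter.mp hv
        obtain ⟨hvL, hvQ, -, -⟩ := hmem v hvF
        exact ⟨hvL, hvQ, lt_of_not_ge hvT⟩
      have hc : (hS.toFinset.filter (fun v => ¬ ((m:ℝ) / T ≤ ∑ i, (v.1 i) ^ 2))).card ≤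
          Nat.card {v : (Fin 2 → ℝ) × (Fin b → ℝ) // v ∈ L ∧
          (-(∑ i, (v.1 i) ^ 2) + ∑ i, (v.2 i) ^ 2) = (m : ℝ) ∧
          (∑ i, (v.1 i) ^ 2) < (m : ℝ) / T} := by
        rw [← Set.ncard_coe_finset]
        calc (↑(hS.toFinset.filter (fun v => ¬ ((m:ℝ) / T ≤ ∑ i, (v.1 i) ^ 2))) :
            Set ((Fin 2 → ℝ) × (Fin b → ℝ))).ncard
            ≤ ({v : (Fin 2 → ℝ) × (Fin b → ℝ) | v ∈ L ∧
              (-(∑ i, (v.1 i) ^ 2) + ∑ i, (v.2 i) ^ 2) = (m : ℝ) ∧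
              (∑ i, (v.1 i) ^ 2) < (m : ℝ) / T}).ncard :=
              Set.ncard_le_ncard hsub hfin2
          _ = Nat.card {v : (Fin 2 → ℝ) × (Fin b → ℝ) // v ∈ L ∧
              (-(∑ i, (v.1 i) ^ 2) + ∑ i, (v.2 i) ^ 2) = (m : ℝ) ∧
              (∑ i, (v.1 i) ^ 2) < (m : ℝ) / T} := (Nat.card_coe_set_eq _).symm
      calc ((hS.toFinset.filter (fun v => ¬ ((m:ℝ) / T ≤ ∑ i, (v.1 i) ^ 2))).card : ℝ)
          ≤ ((Nat.card {v : (Fin 2 → ℝ) × (Fin b → ℝ) // v ∈ L ∧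
            (-(∑ i, (v.1 i) ^ 2) + ∑ i, (v.2 i) ^ 2) = (m : ℝ) ∧
            (∑ i, (v.1 i) ^ 2) < (m : ℝ) / T} : ℕ) : ℝ) := by exact_mod_cast hc
        _ ≤ C * (m:ℝ) ^ ((b:ℝ) / 2) / T + CT * (m:ℝ) ^ (((b:ℝ) + 2) / 4) := hCT m hm1
    calc ∑ v ∈ hS.toFinset.filter (fun v => ¬ ((m:ℝ) / T ≤ ∑ i, (v.1 i) ^ 2)),
        Real.log ((m : ℝ) / (∑ i, (v.1 i) ^ 2))
        ≤ ∑ _v ∈ hS.toFinset.filter (fun v => ¬ ((m:ℝ) / T ≤ ∑ i, (v.1 i) ^ 2)),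
            Real.log m := step1
      _ = ((hS.toFinset.filter
            (fun v => ¬ ((m:ℝ) / T ≤ ∑ i, (v.1 i) ^ 2))).card : ℝ) * Real.log m := by
          rw [Finset.sum_const, nsmul_eq_mul]
      _ ≤ (C * (m:ℝ) ^ ((b:ℝ) / 2) / T + CT * (m:ℝ) ^ (((b:ℝ) + 2) / 4)) * Real.log m :=
          mul_le_mul_of_nonneg_right step2 hlog.le
  have htotal : ∑ v ∈ hS.toFinset, Real.log ((m : ℝ) / (∑ i, (v.1 i) ^ 2)) ≤
      C * (m:ℝ) ^ ((b:ℝ) / 2) * Real.log T +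
      (C * (m:ℝ) ^ ((b:ℝ) / 2) / T + CT * (m:ℝ) ^ (((b:ℝ) + 2) / 4)) * Real.log m := by
    rw [← hsplit]
    exact add_le_add hbig hsmall
  -- now conclude
  have hDpos : (0:ℝ) < (m:ℝ) ^ ((b:ℝ) / 2) * Real.log m := by positivity
  rw [Real.norm_eq_abs, abs_of_nonneg (by positivity)]
  have key : 2 * (∑ v ∈ hS.toFinset, Real.log ((m : ℝ) / (∑ i, (v.1 i) ^ 2))) /
      ((m:ℝ) ^ ((b:ℝ) / 2) * Real.log m) ≤
      2 * C * Real.log T / Real.log m + 2 * C / T +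
        2 * CT * (m:ℝ) ^ (((b:ℝ) + 2) / 4 - (b:ℝ) / 2) := by
    have h1' : 2 * (∑ v ∈ hS.toFinset, Real.log ((m : ℝ) / (∑ i, (v.1 i) ^ 2))) /
        ((m:ℝ) ^ ((b:ℝ) / 2) * Real.log m) ≤
        2 * (C * (m:ℝ) ^ ((b:ℝ) / 2) * Real.log T +
          (C * (m:ℝ) ^ ((b:ℝ) / 2) / T + CT * (m:ℝ) ^ (((b:ℝ) + 2) / 4)) * Real.log m) /
        ((m:ℝ) ^ ((b:ℝ) / 2) * Real.log m) := by
      gcongr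
    refine h1'.trans (le_of_eq ?_)
    rw [Real.rpow_sub hm0]
    field_simp
    ring
  linarith [key, hev1, hev2, hterm2]
end
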